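/- arXiv:1703.08406 — 6 statements merged into one kernel-verified Lean document; each statement's English description precedes it below -/
import Mathlib

section
/- Let A be a nonnegative random variable, and let E_0, E_1, E_2, ... be i.i.d. exponential random variables with rate μ > 0, independent of the i.i.d. sequence A_1, A_2, ... of copies of A. Define N := min{n ≥ 1 : E_{n-1} ≤ A_n} and B := A_1 + ... + A_{N-1} + E_{N-1}. Then B is exponentially distributed with rate μ. (Busy period insensitivity to the arrival distribution.) -/
/-!
Condition on the whole arrival sequence `A = a`, with partial sums `s_m = a_1 + ⋯ + a_m`. The
busy period ends with service `m` and exceeds `t` exactly when `E_k > a_{k+1}` for `k < m` and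
`E_m ∈ (t - s_m, a_{m+1}]`. By independence and the exponential tails, this has probability
`e^{-μ s_m} (e^{-μ (t - s_m)⁺} - e^{-μ a_{m+1}})⁺ = e^{-μ max(t, s_m)} - e^{-μ max(t, s_{m+1})}`,
so after integrating over `A` the sum over `m` telescopes to
`e^{-μ t⁺} - inf_m E[e^{-μ max(t, S_m)}]`. At `t = 0` the busy period is positive almost
surely, which forces this infimum to vanish.
-/

open MeasureTheory ProbabilityTheory

open Set Real

namespace ProbabilityTheory

variable {r : ℝ}

lemma expMeasure_Iic_eq (hr : 0 < r) (x : ℝ) :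
    expMeasure r (Iic x) = ENNReal.ofReal (1 - exp (-(r * max x 0))) := by
  have := isProbabilityMeasure_expMeasure hr
  rw [← ofReal_cdf, cdf_expMeasure_eq hr]
  rcases le_or_gt 0 x with hx | hx
  · rw [if_pos hx, max_eq_left hx]
  · simp [if_neg hx.not_ge, max_eq_right hx.le]

lemma expMeasure_Ioi_eq (hr : 0 < r) (x : ℝ) :
    expMeasure r (Ioi x) = ENNReal.ofReal (exp (-(r * max x 0))) := by
  have := isProbabilityMeasure_expMeasure hr
  have hle : exp (-(r * max x 0)) ≤ 1 := exp_le_one_iff.2 (by simp only [neg_nonpos]; positivity)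
  rw [← compl_Iic, prob_compl_eq_one_sub measurableSet_Iic, expMeasure_Iic_eq hr,
    ← ENNReal.ofReal_one, ← ENNReal.ofReal_sub _ (by linarith), sub_sub_cancel]

lemma prod_expMeasure_Ioi {ι : Type*} (hr : 0 < r) (s : Finset ι) {x : ι → ℝ}
    (hx : ∀ i ∈ s, 0 ≤ x i) :
    ∏ i ∈ s, expMeasure r (Ioi (x i)) = ENNReal.ofReal (exp (-(r * ∑ i ∈ s, x i))) := by
  rw [Finset.prod_congr rfl fun i hi => by rw [expMeasure_Ioi_eq hr, max_eq_left (hx i hi)],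
    ← ENNReal.ofReal_prod_of_nonneg fun _ _ => (exp_pos _).le, ← exp_sum, Finset.mul_sum,
    Finset.sum_neg_distrib]

/-- Memorylessness: `max t s = s + max (t - s) 0` and `max t (s + a) = s + max (t - s) a`. -/
lemma ofReal_exp_mul_expMeasure_Ioc (hr : 0 < r) (s t : ℝ) {a : ℝ} (ha : 0 ≤ a) :
    ENNReal.ofReal (exp (-(r * s))) * expMeasure r (Ioc (t - s) a)
      = ENNReal.ofReal (exp (-(r * max t s))) - ENNReal.ofReal (exp (-(r * max t (s + a)))) := by
  have := isProbabilityMeasure_expMeasure hr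
  have hIoc : Ioc (t - s) a = Ioi (t - s) \ Ioi (max (t - s) a) := by
    ext x
    simp only [mem_Ioc, Set.mem_sdiff, mem_Ioi, not_lt, le_max_iff]
    constructor
    · exact fun h => ⟨h.1, .inr h.2⟩
    · rintro ⟨h1, h2 | h2⟩
      exacts [absurd h1 h2.not_gt, ⟨h1, h2⟩]
  have hexp : ∀ u, exp (-(r * s)) * exp (-(r * max u 0)) = exp (-(r * (s + max u 0))) := by
    intro u; rw [← exp_add]; ring_nf
  rw [hIoc, measure_sdiff (Ioi_subset_Ioi (le_max_left _ _)) measurableSet_Ioi.nullMeasurableSet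
      (measure_ne_top _ _), ENNReal.mul_sub fun _ _ => ENNReal.ofReal_ne_top,
    expMeasure_Ioi_eq hr, expMeasure_Ioi_eq hr, ← ENNReal.ofReal_mul (exp_pos _).le,
    ← ENNReal.ofReal_mul (exp_pos _).le, hexp, hexp, max_eq_left (ha.trans (le_max_right _ _)),
    ← max_add_add_left, ← max_add_add_left]
  congr 4 <;> ring_nf

end ProbabilityTheory

lemma ENNReal.tsum_sub_succ_of_antitone {f : ℕ → ENNReal} (hf : Antitone f) :
    ∑' n, (f n - f (n + 1)) = f 0 - ⨅ n, f n := by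
  have hpartial : ∀ n, ∑ i ∈ Finset.range n, (f i - f (i + 1)) = f 0 - f n := by
    intro n
    induction n with
    | zero => simp
    | succ n ih =>
      rw [Finset.sum_range_succ, ih, tsub_add_tsub_cancel (hf n.zero_le) (hf n.le_succ)]
  simp only [ENNReal.tsum_eq_iSup_nat, hpartial, ENNReal.sub_iInf]

lemma Nat.sInf_one_le_sub_one_eq_iff {p : ℕ → Prop} (hp : {n | 1 ≤ n ∧ p n}.Nonempty) (m : ℕ) :
    sInf {n | 1 ≤ n ∧ p n} - 1 = m ↔ (∀ k < m, ¬ p (k + 1)) ∧ p (m + 1) := by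
  obtain ⟨hpos, hmem⟩ := Nat.sInf_mem (s := {n | 1 ≤ n ∧ p n}) hp
  constructor
  · rintro rfl
    refine ⟨fun k hk hpk => ?_, by rwa [Nat.sub_add_cancel hpos]⟩
    have := Nat.sInf_le (s := {n | 1 ≤ n ∧ p n}) ⟨k.succ_pos, hpk⟩
    omega
  · rintro ⟨hlt, hm⟩
    have hle := Nat.sInf_le (s := {n | 1 ≤ n ∧ p n}) ⟨m.succ_pos, hm⟩
    by_contra hne
    exact hlt (sInf {n | 1 ≤ n ∧ p n} - 1) (by omega) (by rwa [Nat.sub_add_cancel hpos])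

lemma measure_eq_tsum_measure_inter_preimage_singleton {α : Type*} {_ : MeasurableSpace α}
    (P : Measure α) (M : α → ℕ) {s : Set α} (hs : ∀ m, MeasurableSet (s ∩ M ⁻¹' {m})) :
    P s = ∑' m, P (s ∩ M ⁻¹' {m}) := by
  have hcover : s = ⋃ m, s ∩ M ⁻¹' {m} := by ext ω; simp
  conv_lhs => rw [hcover]
  exact measure_iUnion (fun i j hij => ((disjoint_singleton.2 hij).preimage M).mono
    inter_subset_right inter_subset_right) hs

namespace ProbabilityTheory

lemma IndepFun.measure_mem_eq_lintegral {Ω α β : Type*} {_ : MeasurableSpace Ω}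
    [MeasurableSpace α] [MeasurableSpace β] {P : Measure Ω} [IsFiniteMeasure P]
    {X : Ω → α} {Y : Ω → β} (hXY : IndepFun X Y P) (hX : Measurable X) (hY : Measurable Y)
    {D : Set (α × β)} (hD : MeasurableSet D) :
    P {ω | (X ω, Y ω) ∈ D} = ∫⁻ ω, P.map Y (Prod.mk (X ω) ⁻¹' D) ∂P := by
  change P ((fun ω => (X ω, Y ω)) ⁻¹' D) = _
  rw [← Measure.map_apply (hX.prodMk hY) hD,
    (indepFun_iff_map_prod_eq_prod_map_map hX.aemeasurable hY.aemeasurable).1 hXY,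
    Measure.prod_apply hD, lintegral_map (measurable_measure_prodMk_left hD) hX]

lemma iIndepFun.measure_forall_lt_and_mem {Ω β : Type*} {_ : MeasurableSpace Ω}
    [MeasurableSpace β] {P : Measure Ω} {E : ℕ → Ω → β} (hE : iIndepFun E P) (m : ℕ)
    {S : ℕ → Set β} {T : Set β} (hS : ∀ k, MeasurableSet (S k)) (hT : MeasurableSet T) :
    P {ω | (∀ k < m, E k ω ∈ S k) ∧ E m ω ∈ T}
      = (∏ k ∈ Finset.range m, P (E k ⁻¹' S k)) * P (E m ⁻¹' T) := by
  have hset : {ω | (∀ k < m, E k ω ∈ S k) ∧ E m ω ∈ T}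
      = ⋂ k ∈ Finset.range (m + 1), E k ⁻¹' Function.update S m T k := by
    ext ω
    simp only [mem_ofPred_eq, mem_iInter, Finset.mem_range, Nat.lt_succ_iff_lt_or_eq, or_imp,
      forall_and, forall_eq, mem_preimage, Function.update_self]
    refine and_congr (forall₂_congr fun k hk => ?_) Iff.rfl
    rw [Function.update_of_ne hk.ne]
  rw [hset, hE.measure_inter_preimage_eq_mul _ fun k _ => ?_, Finset.prod_range_succ,
    Function.update_self]
  · congr 1
    exact Finset.prod_congr rfl fun k hk => by
      rw [Function.update_of_ne (Finset.mem_range.1 hk).ne]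
  · rcases eq_or_ne k m with rfl | hk
    · rwa [Function.update_self]
    · rw [Function.update_of_ne hk]; exact hS k

end ProbabilityTheory

lemma MeasureTheory.Measure.ext_of_Ioi {α : Type*} [TopologicalSpace α] {_ : MeasurableSpace α}
    [SecondCountableTopology α] [LinearOrder α] [OrderTopology α] [BorelSpace α]
    (μ ν : Measure α) [IsProbabilityMeasure μ] [IsProbabilityMeasure ν]
    (h : ∀ a, μ (Ioi a) = ν (Ioi a)) : μ = ν :=
  ext_of_Iic μ ν fun a => by
    rw [← compl_Ioi, prob_compl_eq_one_sub measurableSet_Ioi,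
      prob_compl_eq_one_sub measurableSet_Ioi, h]

def arrivalTime {Ω : Type*} (A : ℕ → Ω → ℝ) (m : ℕ) (ω : Ω) : ℝ := ∑ i ∈ Finset.Icc 1 m, A i ω

section BusyPeriod

variable {Ω : Type*} {A E : ℕ → Ω → ℝ}

/-- `M ω` is the index of the service that ends the busy period (the paper's `N - 1`). -/
def IsLastServiceIndex (A E : ℕ → Ω → ℝ) (M : Ω → ℕ) : Prop :=
  ∀ ω m, M ω = m ↔ (∀ k < m, A (k + 1) ω < E k ω) ∧ E m ω ≤ A (m + 1) ω

lemma arrivalTime_zero (ω : Ω) : arrivalTime A 0 ω = 0 := by simp [arrivalTime]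

lemma arrivalTime_succ (m : ℕ) (ω : Ω) :
    arrivalTime A (m + 1) ω = arrivalTime A m ω + A (m + 1) ω :=
  Finset.sum_Icc_succ_top (by omega) _

lemma arrivalTime_eq_sum_range (m : ℕ) (ω : Ω) :
    arrivalTime A m ω = ∑ k ∈ Finset.range m, A (k + 1) ω := by
  induction m with
  | zero => simp [arrivalTime_zero]
  | succ m ih => rw [arrivalTime_succ, ih, Finset.sum_range_succ]

lemma arrivalTime_nonneg (hA : ∀ n ω, 0 ≤ A n ω) (m : ℕ) (ω : Ω) : 0 ≤ arrivalTime A m ω :=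
  Finset.sum_nonneg fun i _ => hA i ω

lemma arrivalTime_mono (hA : ∀ n ω, 0 ≤ A n ω) (ω : Ω) : Monotone (arrivalTime A · ω) :=
  monotone_nat_of_le_succ fun m => by
    rw [arrivalTime_succ]; linarith [hA (m + 1) ω]

variable [MeasureSpace Ω] {r : ℝ}

lemma measurable_arrivalTime (hA : ∀ n, Measurable (A n)) (m : ℕ) :
    Measurable (arrivalTime A m) :=
  Finset.measurable_sum _ fun i _ => hA i

lemma IsLastServiceIndex.measurable {M : Ω → ℕ} (hM : IsLastServiceIndex A E M)
    (hAmeas : ∀ n, Measurable (A n)) (hEmeas : ∀ n, Measurable (E n)) :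
    Measurable M :=
  measurable_to_countable' fun m => by
    have hfiber : M ⁻¹' {m} = {ω | (∀ k < m, A (k + 1) ω < E k ω) ∧ E m ω ≤ A (m + 1) ω} :=
      ext fun ω => hM ω m
    rw [hfiber]
    measurability

lemma ae_pos_arrivalTime_add (hr : 0 < r) (hEmeas : ∀ n, Measurable (E n))
    (hAnonneg : ∀ n ω, 0 ≤ A n ω) (hEexp : ∀ n, Measure.map (E n) ℙ = expMeasure r)
    (M : Ω → ℕ) :
    ∀ᵐ ω, 0 < arrivalTime A (M ω) ω + E (M ω) ω := by
  rw [ae_iff]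
  refine measure_mono_null (t := ⋃ m, E m ⁻¹' Iic 0) (fun ω hω => mem_iUnion.2 ⟨M ω, ?_⟩)
    (measure_iUnion_null fun m => ?_)
  · have := arrivalTime_nonneg hAnonneg (M ω) ω
    simp only [mem_ofPred_eq, not_lt] at hω
    simp only [mem_preimage, mem_Iic]
    linarith
  · rw [← Measure.map_apply (hEmeas m) measurableSet_Iic, hEexp, expMeasure_Iic_eq hr]
    simp

lemma measurable_arrivalTime_add (hAmeas : ∀ n, Measurable (A n))
    (hEmeas : ∀ n, Measurable (E n)) {M : Ω → ℕ} (hM : Measurable M) :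
    Measurable fun ω => arrivalTime A (M ω) ω + E (M ω) ω := by
  have h : Measurable fun p : ℕ × Ω => arrivalTime A p.1 p.2 + E p.1 p.2 :=
    measurable_from_prod_countable_right fun m => (measurable_arrivalTime hAmeas m).add (hEmeas m)
  exact h.comp (hM.prodMk measurable_id)

variable [IsProbabilityMeasure (ℙ : Measure Ω)]

lemma measure_forall_lt_and_mem_eq_lintegral
    (hAmeas : ∀ n, Measurable (A n)) (hEmeas : ∀ n, Measurable (E n))
    (hEindep : iIndepFun E ℙ) (hEexp : ∀ n, Measure.map (E n) ℙ = expMeasure r)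
    (hindep : IndepFun (fun ω n => A n ω) (fun ω n => E n ω) ℙ) (m : ℕ)
    {T : (ℕ → ℝ) → Set ℝ} (hT : MeasurableSet {p : (ℕ → ℝ) × ℝ | p.2 ∈ T p.1}) :
    ℙ {ω | (∀ k < m, A (k + 1) ω < E k ω) ∧ E m ω ∈ T (fun n => A n ω)}
      = ∫⁻ ω, (∏ k ∈ Finset.range m, expMeasure r (Ioi (A (k + 1) ω)))
          * expMeasure r (T fun n => A n ω) ∂ℙ := by
  have hEmeas' : Measurable fun ω n => E n ω := measurable_pi_lambda _ hEmeas
  let D : Set ((ℕ → ℝ) × (ℕ → ℝ)) := {p | (∀ k < m, p.1 (k + 1) < p.2 k) ∧ p.2 m ∈ T p.1}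
  have hD : MeasurableSet D := by
    have hproj : Measurable fun p : (ℕ → ℝ) × (ℕ → ℝ) => (p.1, p.2 m) := by fun_prop
    have hlast : MeasurableSet {p : (ℕ → ℝ) × (ℕ → ℝ) | p.2 m ∈ T p.1} := hproj hT
    have hfirst : MeasurableSet {p : (ℕ → ℝ) × (ℕ → ℝ) | ∀ k < m, p.1 (k + 1) < p.2 k} := by
      measurability
    exact hfirst.inter hlast
  have hsection : ∀ a, Measure.map (fun ω n => E n ω) ℙ (Prod.mk a ⁻¹' D)
      = (∏ k ∈ Finset.range m, expMeasure r (Ioi (a (k + 1)))) * expMeasure r (T a) := by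
    intro a
    rw [Measure.map_apply hEmeas' (measurable_prodMk_left hD)]
    refine (hEindep.measure_forall_lt_and_mem m (fun k => measurableSet_Ioi)
      (measurable_prodMk_left hT)).trans ?_
    simp only [← Measure.map_apply (hEmeas _) measurableSet_Ioi,
      ← Measure.map_apply (hEmeas _) (measurable_prodMk_left hT), hEexp]
    rfl
  exact (hindep.measure_mem_eq_lintegral (measurable_pi_lambda _ hAmeas) hEmeas' hD).trans
    (lintegral_congr fun ω => hsection _)

lemma measure_forall_lt_and_mem_Ioc (hr : 0 < r)
    (hAmeas : ∀ n, Measurable (A n)) (hEmeas : ∀ n, Measurable (E n))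
    (hAnonneg : ∀ n ω, 0 ≤ A n ω)
    (hEindep : iIndepFun E ℙ) (hEexp : ∀ n, Measure.map (E n) ℙ = expMeasure r)
    (hindep : IndepFun (fun ω n => A n ω) (fun ω n => E n ω) ℙ) (m : ℕ) (t : ℝ) :
    ℙ {ω | (∀ k < m, A (k + 1) ω < E k ω) ∧
        E m ω ∈ Ioc (t - arrivalTime A m ω) (A (m + 1) ω)}
      = ∫⁻ ω, ENNReal.ofReal (exp (-(r * max t (arrivalTime A m ω)))) ∂ℙ
        - ∫⁻ ω, ENNReal.ofReal (exp (-(r * max t (arrivalTime A (m + 1) ω)))) ∂ℙ := by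
  have hT : MeasurableSet
      {p : (ℕ → ℝ) × ℝ | p.2 ∈ Ioc (t - ∑ i ∈ Finset.Icc 1 m, p.1 i) (p.1 (m + 1))} := by
    measurability
  have hmeas : Measurable fun ω => ENNReal.ofReal (exp (-(r * max t (arrivalTime A (m + 1) ω)))) :=
    by have := measurable_arrivalTime hAmeas (m + 1); fun_prop
  have hle_one : ∫⁻ ω, ENNReal.ofReal (exp (-(r * max t (arrivalTime A (m + 1) ω)))) ∂ℙ ≤ 1 :=
    lintegral_le_const <| ae_of_all _ fun ω => ENNReal.ofReal_le_one.2 <| exp_le_one_iff.2 <|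
      neg_nonpos.2 <| mul_nonneg hr.le <| (arrivalTime_nonneg hAnonneg _ ω).trans (le_max_right _ _)
  have hmono : ∀ ω, ENNReal.ofReal (exp (-(r * max t (arrivalTime A (m + 1) ω))))
      ≤ ENNReal.ofReal (exp (-(r * max t (arrivalTime A m ω)))) := fun ω => by
    gcongr
    exact arrivalTime_mono hAnonneg ω m.le_succ
  refine (measure_forall_lt_and_mem_eq_lintegral hAmeas hEmeas hEindep hEexp hindep m
    (T := fun a => Ioc (t - ∑ i ∈ Finset.Icc 1 m, a i) (a (m + 1))) hT).trans ?_
  rw [← lintegral_sub hmeas (ne_top_of_le_ne_top ENNReal.one_ne_top hle_one) (ae_of_all _ hmono)]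
  refine lintegral_congr fun ω => ?_
  rw [prod_expMeasure_Ioi hr _ fun k _ => hAnonneg _ ω, ← arrivalTime_eq_sum_range,
    arrivalTime_succ]
  exact ofReal_exp_mul_expMeasure_Ioc hr _ t (hAnonneg _ ω)

lemma measure_lt_arrivalTime_add_eq (hr : 0 < r)
    (hAmeas : ∀ n, Measurable (A n)) (hEmeas : ∀ n, Measurable (E n))
    (hAnonneg : ∀ n ω, 0 ≤ A n ω)
    (hEindep : iIndepFun E ℙ) (hEexp : ∀ n, Measure.map (E n) ℙ = expMeasure r)
    (hindep : IndepFun (fun ω n => A n ω) (fun ω n => E n ω) ℙ) {M : Ω → ℕ}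
    (hM : IsLastServiceIndex A E M) (t : ℝ) :
    ℙ {ω | t < arrivalTime A (M ω) ω + E (M ω) ω}
      = ENNReal.ofReal (exp (-(r * max t 0)))
        - ⨅ m, ∫⁻ ω, ENNReal.ofReal (exp (-(r * max t (arrivalTime A m ω)))) ∂ℙ := by
  have hfiber : ∀ m, {ω | t < arrivalTime A (M ω) ω + E (M ω) ω} ∩ M ⁻¹' {m}
      = {ω | (∀ k < m, A (k + 1) ω < E k ω) ∧
          E m ω ∈ Ioc (t - arrivalTime A m ω) (A (m + 1) ω)} := by
    intro m
    ext ω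
    simp only [mem_inter_iff, mem_preimage, mem_singleton_iff, mem_ofPred_eq, mem_Ioc]
    constructor
    · rintro ⟨h, rfl⟩
      obtain ⟨h1, h2⟩ := (hM ω _).1 rfl
      exact ⟨h1, by linarith, h2⟩
    · rintro ⟨h1, h2, h3⟩
      obtain rfl := (hM ω m).2 ⟨h1, h3⟩
      exact ⟨by linarith, rfl⟩
  have hfiber_meas : ∀ m, MeasurableSet
      ({ω | t < arrivalTime A (M ω) ω + E (M ω) ω} ∩ M ⁻¹' {m}) := fun m => by
    have := measurable_arrivalTime hAmeas m
    rw [hfiber]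
    measurability
  have hanti : Antitone fun m =>
      ∫⁻ ω, ENNReal.ofReal (exp (-(r * max t (arrivalTime A m ω)))) ∂ℙ :=
    fun m n hmn => lintegral_mono fun ω => by
      gcongr
      exact arrivalTime_mono hAnonneg ω hmn
  rw [measure_eq_tsum_measure_inter_preimage_singleton ℙ M hfiber_meas]
  simp only [hfiber, measure_forall_lt_and_mem_Ioc hr hAmeas hEmeas hAnonneg hEindep hEexp hindep]
  rw [ENNReal.tsum_sub_succ_of_antitone hanti]
  simp only [arrivalTime_zero, lintegral_const, measure_univ, mul_one]

lemma measure_lt_arrivalTime_add_eq_exp (hr : 0 < r)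
    (hAmeas : ∀ n, Measurable (A n)) (hEmeas : ∀ n, Measurable (E n))
    (hAnonneg : ∀ n ω, 0 ≤ A n ω)
    (hEindep : iIndepFun E ℙ) (hEexp : ∀ n, Measure.map (E n) ℙ = expMeasure r)
    (hindep : IndepFun (fun ω n => A n ω) (fun ω n => E n ω) ℙ) {M : Ω → ℕ}
    (hM : IsLastServiceIndex A E M) (t : ℝ) :
    ℙ {ω | t < arrivalTime A (M ω) ω + E (M ω) ω} = ENNReal.ofReal (exp (-(r * max t 0))) := by
  have htail := measure_lt_arrivalTime_add_eq hr hAmeas hEmeas hAnonneg hEindep hEexp hindep hM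
  set L := fun u m => ∫⁻ ω, ENNReal.ofReal (exp (-(r * max u (arrivalTime A m ω)))) ∂ℙ
  have hpos : ℙ {ω | 0 < arrivalTime A (M ω) ω + E (M ω) ω} = 1 := by
    have hae := ae_pos_arrivalTime_add hr hEmeas hAnonneg hEexp M
    exact (measure_congr (ae_eq_univ.2 (ae_iff.1 hae))).trans measure_univ
  have hinf0 : ⨅ m, L 0 m = 0 := by
    have h1 : 1 - ⨅ m, L 0 m = 1 := by simpa [hpos] using (htail 0).symm
    have hle : ⨅ m, L 0 m ≤ 1 := (iInf_le _ 0).trans_eq (by simp [L, arrivalTime_zero])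
    rw [← ENNReal.sub_sub_cancel ENNReal.one_ne_top hle, h1, tsub_self]
  have hinf : ⨅ m, L t m = 0 := by
    refine le_antisymm (hinf0 ▸ iInf_mono fun m => lintegral_mono fun ω => ?_) bot_le
    gcongr ENNReal.ofReal (exp (-(r * ?_)))
    exact max_le (le_max_of_le_right (arrivalTime_nonneg hAnonneg m ω)) (le_max_right _ _)
  rw [htail t, hinf, tsub_zero]

end BusyPeriod

theorem busy_period_exponential_general
    {Ω : Type*} [MeasureSpace Ω] [IsProbabilityMeasure (ℙ : Measure Ω)]
    (μ : ℝ) (hμ : 0 < μ)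
    (A : ℕ → Ω → ℝ) (E : ℕ → Ω → ℝ)
    (hAmeas : ∀ n, Measurable (A n)) (hEmeas : ∀ n, Measurable (E n))
    (hAnonneg : ∀ n ω, 0 ≤ A n ω)
    -- the E's are i.i.d. Exp(μ)
    (hEindep : iIndepFun E ℙ)
    (hEexp : ∀ n, Measure.map (E n) ℙ = expMeasure μ)
    -- the whole E-sequence is independent of the whole A-sequence
    (hindep : IndepFun (fun ω => (fun n => A n ω)) (fun ω => (fun n => E n ω)) ℙ)
    (N : Ω → ℕ)
    (hN : ∀ ω, N ω = sInf {n : ℕ | 1 ≤ n ∧ E (n - 1) ω ≤ A n ω})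
    (hNfin : ∀ ω, {n : ℕ | 1 ≤ n ∧ E (n - 1) ω ≤ A n ω}.Nonempty)
    (B : Ω → ℝ)
    (hB : ∀ ω, B ω = (∑ i ∈ Finset.Icc 1 (N ω - 1), A i ω) + E (N ω - 1) ω) :
    Measure.map B ℙ = expMeasure μ := by
  have hM : IsLastServiceIndex A E (N · - 1) := by
    intro ω m
    dsimp only
    rw [hN ω, Nat.sInf_one_le_sub_one_eq_iff (hNfin ω)]
    simp only [Nat.add_sub_cancel, not_le]
  have hB' : B = fun ω => arrivalTime A (N ω - 1) ω + E (N ω - 1) ω := funext hB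
  have hBmeas : Measurable B :=
    hB' ▸ measurable_arrivalTime_add hAmeas hEmeas (hM.measurable hAmeas hEmeas)
  have := isProbabilityMeasure_expMeasure hμ
  have := Measure.isProbabilityMeasure_map (μ := ℙ) hBmeas.aemeasurable
  refine Measure.ext_of_Ioi _ _ fun t => ?_
  rw [Measure.map_apply hBmeas measurableSet_Ioi, expMeasure_Ioi_eq hμ, hB']
  exact measure_lt_arrivalTime_add_eq_exp hμ hAmeas hEmeas hAnonneg hEindep hEexp hindep hM t

/-- Busy period insensitivity: with i.i.d. nonnegative inter-arrival times `A 1, A 2, ...`,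
i.i.d. `Exp μ` service times `E 0, E 1, ...` independent of the arrival sequence,
`N := min {n ≥ 1 : E (n-1) ≤ A n}` and `B := A 1 + ⋯ + A (N-1) + E (N-1)`,
the random variable `B` is exponentially distributed with rate `μ`. -/
theorem busy_period_exponential
    {Ω : Type*} [MeasureSpace Ω] [IsProbabilityMeasure (ℙ : Measure Ω)]
    (μ : ℝ) (hμ : 0 < μ)
    (A : ℕ → Ω → ℝ) (E : ℕ → Ω → ℝ)
    (hAmeas : ∀ n, Measurable (A n)) (hEmeas : ∀ n, Measurable (E n))
    (hAnonneg : ∀ n ω, 0 ≤ A n ω)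
    -- the A's are i.i.d.
    (hAindep : iIndepFun A ℙ)
    (hAident : ∀ n, Measure.map (A n) ℙ = Measure.map (A 1) ℙ)
    -- the E's are i.i.d. Exp(μ)
    (hEindep : iIndepFun E ℙ)
    (hEexp : ∀ n, Measure.map (E n) ℙ = expMeasure μ)
    -- the whole E-sequence is independent of the whole A-sequence
    (hindep : IndepFun (fun ω => (fun n => A n ω)) (fun ω => (fun n => E n ω)) ℙ)
    (N : Ω → ℕ)
    (hN : ∀ ω, N ω = sInf {n : ℕ | 1 ≤ n ∧ E (n - 1) ω ≤ A n ω})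
    (hNfin : ∀ ω, {n : ℕ | 1 ≤ n ∧ E (n - 1) ω ≤ A n ω}.Nonempty)
    (B : Ω → ℝ)
    (hB : ∀ ω, B ω = (∑ i ∈ Finset.Icc 1 (N ω - 1), A i ω) + E (N ω - 1) ω) :
    Measure.map B ℙ = expMeasure μ :=
  busy_period_exponential_general μ hμ A E hAmeas hEmeas hAnonneg hEindep hEexp hindep N hN hNfin B
    hB
end

section
/- Let (π_k)_{k≥0} be a probability distribution on the nonnegative integers satisfying the balance equations λ π_k = (k+1) μ Σ_{i ≥ k+1} π_i for all k ≥ 0, where λ, μ > 0, and suppose all factorial moments m_n := E[∏_{i=0}^{n-1}(Q - i)] of a random variable Q with P(Q = k) = π_k are finite. Then with ρ := λ/μ, the factorial moments satisfy the recursion m_{n+2} = (n+2)(ρ m_n − m_{n+1}) for all n ≥ 0, where m_0 = 1. -/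
/-!
Write `T_k = ∑_{i > k} π_i`, so that the balance equations read `ρ π_k = (k+1) T_k`.
With `(k)_n` the falling factorial, `ρ m_n = ∑_k (k+1)_{n+1} T_k`; since every term is
nonnegative the double sum may be reordered into `∑_i π_i ∑_{k<i} (k+1)_{n+1}`.
The hockey-stick identity `(n+2) ∑_{j ≤ i} (j)_{n+1} = (i+1)_{n+2} = (i)_{n+2} + (n+2) (i)_{n+1}`
then turns this into `(m_{n+2} + (n+2) m_{n+1}) / (n+2)`.
-/

open Finset

namespace Nat

theorem prod_range_cast_sub_eq_descFactorial {R : Type*} [CommRing R] (k n : ℕ) :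
    ∏ j ∈ range n, ((k : R) - j) = k.descFactorial n :=
  (descPochhammer_eval_eq_prod_range n (k : R)).symm.trans
    (descPochhammer_eval_eq_descFactorial R k n)

theorem succ_descFactorial_succ_eq_add (i r : ℕ) :
    (i + 1).descFactorial (r + 1) = i.descFactorial (r + 1) + (r + 1) * i.descFactorial r := by
  rw [succ_descFactorial_succ, descFactorial_succ, ← add_mul]
  rcases lt_or_ge i r with h | h
  · simp [descFactorial_eq_zero_iff_lt.mpr h]
  · congr 1
    omega

theorem mul_sum_range_descFactorial (r N : ℕ) :
    (r + 1) * ∑ j ∈ range N, j.descFactorial r = N.descFactorial (r + 1) := by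
  induction N with
  | zero => simp
  | succ N ih => rw [sum_range_succ, mul_add, ih, succ_descFactorial_succ_eq_add]

theorem mul_sum_range_succ_descFactorial (r i : ℕ) :
    (r + 2) * ∑ k ∈ range i, (k + 1).descFactorial (r + 1) =
      i.descFactorial (r + 2) + (r + 2) * i.descFactorial (r + 1) := by
  have h := mul_sum_range_descFactorial (r + 1) (i + 1)
  rw [sum_range_succ', zero_descFactorial_succ, add_zero] at h
  rw [h, succ_descFactorial_succ_eq_add]

theorem sum_range_succ_descFactorial_eq_div {K : Type*} [Field K] [CharZero K] (r i : ℕ) :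
    ∑ k ∈ range i, ((k + 1).descFactorial (r + 1) : K) =
      (i.descFactorial (r + 2) + (r + 2) * i.descFactorial (r + 1)) / (r + 2) := by
  rw [eq_div_iff (by exact_mod_cast (r + 1).succ_ne_zero), mul_comm]
  exact_mod_cast mul_sum_range_succ_descFactorial r i

end Nat

theorem tsum_mul_tsum_tail_eq_tsum_mul_sum_range {f g : ℕ → ℝ} (hf : 0 ≤ f) (hg : 0 ≤ g)
    (h : Summable fun i ↦ f i * ∑ k ∈ range i, g k) :
    ∑' k, g k * ∑' i, (if k + 1 ≤ i then f i else 0) = ∑' i, f i * ∑ k ∈ range i, g k := by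
  set F : ℕ → ℕ → ℝ := fun i k ↦ if k < i then f i * g k else 0 with hF
  have hrow_zero (i : ℕ) : ∀ k ∉ range i, F i k = 0 := fun k hk ↦ by
    simp [hF, mem_range.not.mp hk]
  have hrow (i : ℕ) : ∑' k, F i k = f i * ∑ k ∈ range i, g k := by
    rw [tsum_eq_sum (hrow_zero i), mul_sum]
    refine sum_congr rfl fun k hk ↦ ?_
    simp [hF, mem_range.mp hk]
  have hcol (k : ℕ) : ∑' i, F i k = g k * ∑' i, (if k + 1 ≤ i then f i else 0) := by
    rw [← tsum_mul_left]
    refine tsum_congr fun i ↦ ?_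
    simp [hF, mul_comm]
  have hF_summable : Summable (Function.uncurry F) := by
    refine (summable_prod_of_nonneg fun p ↦ ?_).mpr
      ⟨fun i ↦ summable_of_ne_finset_zero (hrow_zero i), ?_⟩
    · simp only [Function.uncurry, hF, Pi.zero_apply]
      split_ifs
      exacts [mul_nonneg (hf _) (hg _), le_rfl]
    · simpa only [Function.uncurry_apply_pair, hrow] using h
  simp only [← hcol, ← hrow]
  exact hF_summable.tsum_comm

theorem factorial_moment_recursion_general
    (lam mu : ℝ) (hmu : 0 < mu)
    (π : ℕ → ℝ) (hπnonneg : ∀ k, 0 ≤ π k)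
    (hπtotal : ∑' k, π k = 1)
    (hbalance : ∀ k : ℕ,
      lam * π k = ((k : ℝ) + 1) * mu * ∑' i : ℕ, if k + 1 ≤ i then π i else 0)
    (m : ℕ → ℝ)
    (hm : ∀ n, m n = ∑' k : ℕ, (∏ i ∈ Finset.range n, ((k : ℝ) - i)) * π k)
    (hmsum : ∀ n, Summable (fun k : ℕ => (∏ i ∈ Finset.range n, ((k : ℝ) - i)) * π k))
    (ρ : ℝ) (hρ : ρ = lam / mu) :
    m 0 = 1 ∧ ∀ n : ℕ, m (n + 2) = ((n : ℝ) + 2) * (ρ * m n - m (n + 1)) := by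
  simp only [Nat.prod_range_cast_sub_eq_descFactorial] at hm hmsum
  refine ⟨by simpa [hm] using hπtotal, fun n ↦ ?_⟩
  have hρπ (k : ℕ) :
      ρ * π k = ((k : ℝ) + 1) * ∑' i : ℕ, if k + 1 ≤ i then π i else 0 := by
    rw [hρ, div_mul_eq_mul_div, hbalance k]
    field_simp
  have hpartial (i : ℕ) : π i * ∑ k ∈ range i, ((k + 1).descFactorial (n + 1) : ℝ) =
      ((n : ℝ) + 2)⁻¹ * ((i.descFactorial (n + 2) : ℝ) * π i +
        ((n : ℝ) + 2) * ((i.descFactorial (n + 1) : ℝ) * π i)) := by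
    rw [Nat.sum_range_succ_descFactorial_eq_div]
    ring
  have hsummable := ((hmsum (n + 2)).add ((hmsum (n + 1)).mul_left ((n : ℝ) + 2))).mul_left
    ((n : ℝ) + 2)⁻¹
  have hswap : ρ * m n = ∑' i, π i * ∑ k ∈ range i, ((k + 1).descFactorial (n + 1) : ℝ) := by
    calc ρ * m n = ∑' k, ((k + 1).descFactorial (n + 1) : ℝ) *
          ∑' i : ℕ, (if k + 1 ≤ i then π i else 0) := by
          rw [hm, ← tsum_mul_left]
          refine tsum_congr fun k ↦ ?_
          rw [Nat.succ_descFactorial_succ]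
          push_cast
          linear_combination (k.descFactorial n : ℝ) * hρπ k
      _ = _ := tsum_mul_tsum_tail_eq_tsum_mul_sum_range hπnonneg (fun _ ↦ by positivity)
          (by simpa only [hpartial] using hsummable)
  rw [hswap, tsum_congr hpartial, tsum_mul_left, (hmsum _).tsum_add ((hmsum _).mul_left _),
    tsum_mul_left, ← hm, ← hm, mul_sub, mul_inv_cancel_left₀ (by positivity)]
  ring

/-- For a probability distribution `π` on `ℕ` satisfying the balance equations
`λ π_k = (k+1) μ ∑_{i ≥ k+1} π_i`, the factorial moments
`m_n = ∑_k (∏_{i<n} (k - i)) π_k` (assumed finite, i.e. the defining series are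
summable) satisfy `m_{n+2} = (n+2)(ρ m_n - m_{n+1})` with `ρ = λ/μ` and `m_0 = 1`. -/
theorem factorial_moment_recursion
    (lam mu : ℝ) (hlam : 0 < lam) (hmu : 0 < mu)
    (π : ℕ → ℝ) (hπnonneg : ∀ k, 0 ≤ π k) (hπsum : Summable π)
    (hπtotal : ∑' k, π k = 1)
    (hbalance : ∀ k : ℕ,
      lam * π k = ((k : ℝ) + 1) * mu * ∑' i : ℕ, if k + 1 ≤ i then π i else 0)
    (m : ℕ → ℝ)
    (hm : ∀ n, m n = ∑' k : ℕ, (∏ i ∈ Finset.range n, ((k : ℝ) - i)) * π k)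
    (hmsum : ∀ n, Summable (fun k : ℕ => (∏ i ∈ Finset.range n, ((k : ℝ) - i)) * π k))
    (ρ : ℝ) (hρ : ρ = lam / mu) :
    m 0 = 1 ∧ ∀ n : ℕ, m (n + 2) = ((n : ℝ) + 2) * (ρ * m n - m (n + 1)) :=
  factorial_moment_recursion_general lam mu hmu π hπnonneg hπtotal hbalance m hm hmsum ρ hρ
end

section
/- Let à be a nonnegative random variable with E[Ã] = 1 and P(Ã > 0) > 0, and for ρ > 0 and k ≥ 1 define P(Q_ρ ≥ k) = ((1 − E[e^{−kÃ/ρ}])/(k/ρ)) ∏_{i=1}^{k−1} E[e^{−iÃ/ρ}]. Then for every x > 0, P(Q_ρ/√ρ ≥ x) → e^{−x²/2} as ρ → ∞. -/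
/-!
Writing `φ(s) = 𝔼 e^{-sÃ} = mgf Ã (-s)`, the tail at `k = ⌈x √ρ⌉` is
`(1 - φ(k/ρ))/(k/ρ) · exp (∑_{0<i<k} log φ(i/ρ))`. All arguments `i/ρ ≤ k/ρ ≈ x/√ρ` tend to
`0`, and `φ` has right derivative `-𝔼 Ã = -1` at `0`. Hence the first factor tends to `1`, and
`log φ(s) = -s + o(s)` turns the sum into `-∑_{0<i<k} i/ρ + o(k²/ρ) → -x²/2`.
-/

open MeasureTheory ProbabilityTheory Filter Topology Finset Real Asymptotics

lemma sum_Icc_one_sub_one_natCast (n : ℕ) : ∑ i ∈ Icc 1 (n - 1), (i : ℝ) = n * (n - 1) / 2 := by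
  induction n with
  | zero => simp
  | succ m ih =>
    rcases Nat.eq_zero_or_pos m with rfl | hm
    · simp
    · rw [Nat.add_sub_cancel, ← Nat.sub_add_cancel hm, sum_Icc_succ_top (by omega), ih,
        Nat.sub_add_cancel hm]
      push_cast [Nat.cast_sub hm]
      ring

/-- `∑_{0<i<n} g (i h) ≈ c ∑_{0<i<n} i h ≈ c n² h / 2`, since every `i h` lies in `[n h, 0)`. -/
lemma tendsto_sum_Icc_comp_nat_mul {α : Type*} {l : Filter α} {g : ℝ → ℝ} {c L : ℝ}
    (hg : HasDerivWithinAt g c (Set.Iio 0) 0) (hg0 : g 0 = 0) {h : α → ℝ} {n : α → ℕ}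
    (hh : ∀ᶠ a in l, h a < 0) (hnh : Tendsto (fun a => n a * h a) l (𝓝 0))
    (hn2h : Tendsto (fun a => (n a : ℝ) ^ 2 * h a) l (𝓝 L)) :
    Tendsto (fun a => ∑ i ∈ Icc 1 (n a - 1), g (i * h a)) l (𝓝 (c * (L / 2))) := by
  set T : α → ℝ := fun a => ∑ i ∈ Icc 1 (n a - 1), (i : ℝ) * h a
  have hT : Tendsto T l (𝓝 (L / 2)) := by
    have hTeq : T = fun a => ((n a : ℝ) ^ 2 * h a - n a * h a) / 2 := by
      funext a
      simp only [T]
      rw [← sum_mul, sum_Icc_one_sub_one_natCast]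
      ring
    simpa [hTeq] using (hn2h.sub hnh).div_const 2
  have herr : (fun a => ∑ i ∈ Icc 1 (n a - 1), g (i * h a) - c * T a) =o[l] T := by
    refine isLittleO_iff.2 fun ε hε => ?_
    have hloc : ∀ᶠ t in 𝓝[<] 0, |g t - c * t| ≤ ε * |t| := by
      simpa [hg0, mul_comm] using (hasDerivWithinAt_iff_isLittleO.1 hg).def hε
    obtain ⟨u, hu, hsub⟩ := mem_nhdsLT_iff_exists_Ioo_subset.1 hloc
    filter_upwards [hh, hnh.eventually (lt_mem_nhds hu)] with a ha hna
    have hmem : ∀ i ∈ Icc 1 (n a - 1), (i : ℝ) * h a ∈ Set.Ioo u 0 := by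
      intro i hi
      obtain ⟨hi1, hi2⟩ := mem_Icc.1 hi
      have hin : (i : ℝ) ≤ n a := by exact_mod_cast hi2.trans (Nat.sub_le _ _)
      exact ⟨by nlinarith, mul_neg_of_pos_of_neg (by exact_mod_cast hi1) ha⟩
    have hTneg : T a ≤ 0 := sum_nonpos fun i hi => (hmem i hi).2.le
    calc ‖∑ i ∈ Icc 1 (n a - 1), g (i * h a) - c * T a‖
        = |∑ i ∈ Icc 1 (n a - 1), (g (i * h a) - c * (i * h a))| := by
          rw [sum_sub_distrib, ← mul_sum, Real.norm_eq_abs]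
      _ ≤ ∑ i ∈ Icc 1 (n a - 1), |g (i * h a) - c * (i * h a)| := abs_sum_le_sum_abs _ _
      _ ≤ ∑ i ∈ Icc 1 (n a - 1), ε * -(i * h a) := sum_le_sum fun i hi => by
          simpa [abs_of_neg (hmem i hi).2] using hsub (hmem i hi)
      _ = ε * ‖T a‖ := by rw [← mul_sum, sum_neg_distrib, Real.norm_eq_abs, abs_of_nonpos hTneg]
  have herr0 := (isLittleO_one_iff ℝ).1 (herr.trans_isBigO (hT.isBigO_one ℝ))
  simpa using herr0.add (hT.const_mul c)

lemma tendsto_natCeil_mul_sqrt_div {x : ℝ} (hx : 0 ≤ x) :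
    Tendsto (fun ρ => (⌈x * √ρ⌉₊ : ℝ) / ρ) atTop (𝓝 0) := by
  have hk := (tendsto_nat_ceil_mul_div_atTop hx).comp tendsto_sqrt_atTop
  have hlim := hk.mul (tendsto_inv_atTop_zero.comp tendsto_sqrt_atTop)
  rw [mul_zero] at hlim
  refine hlim.congr' ?_
  filter_upwards [eventually_gt_atTop 0] with ρ hρ
  rw [Function.comp_apply, Function.comp_apply, div_eq_mul_inv, mul_assoc, ← mul_inv, mul_self_sqrt hρ.le, div_eq_mul_inv]

lemma tendsto_natCeil_mul_sqrt_sq_div {x : ℝ} (hx : 0 ≤ x) :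
    Tendsto (fun ρ => (⌈x * √ρ⌉₊ : ℝ) ^ 2 / ρ) atTop (𝓝 (x ^ 2)) := by
  have hk := (tendsto_nat_ceil_mul_div_atTop hx).comp tendsto_sqrt_atTop
  refine (hk.pow 2).congr' ?_
  filter_upwards [eventually_gt_atTop 0] with ρ hρ
  rw [Function.comp_apply, div_pow, sq_sqrt hρ.le]

section MomentGeneratingFunction

variable {Ω : Type*} [MeasurableSpace Ω] {μ : Measure Ω} {X : Ω → ℝ}

lemma integrable_exp_mul_of_nonneg_of_nonpos [IsFiniteMeasure μ] (hX : AEMeasurable X μ)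
    (h0 : 0 ≤ᵐ[μ] X) {t : ℝ} (ht : t ≤ 0) : Integrable (fun ω => exp (t * X ω)) μ := by
  refine .of_mem_Icc 0 1 (measurable_exp.comp_aemeasurable (hX.const_mul t)) ?_
  filter_upwards [h0] with ω hω
  exact ⟨(exp_pos _).le, exp_le_one_iff.2 (mul_nonpos_of_nonpos_of_nonneg ht hω)⟩

lemma abs_exp_mul_sub_one_div_le {t x : ℝ} (ht : t < 0) (hx : 0 ≤ x) :
    |(exp (t * x) - 1) / t| ≤ x := by
  have hle : exp (t * x) ≤ 1 := exp_le_one_iff.2 (mul_nonpos_of_nonpos_of_nonneg ht.le hx)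
  have hge : t * x + 1 ≤ exp (t * x) := add_one_le_exp _
  rw [abs_div, abs_of_nonpos (by linarith), abs_of_neg ht, div_le_iff₀ (neg_pos.2 ht)]
  linarith

lemma tendsto_exp_mul_sub_one_div (x : ℝ) :
    Tendsto (fun t => (exp (t * x) - 1) / t) (𝓝[≠] 0) (𝓝 x) := by
  have hd : HasDerivAt (fun t => exp (t * x)) x 0 := by
    simpa using ((hasDerivAt_id (0 : ℝ)).mul_const x).exp
  simpa [div_eq_inv_mul] using hasDerivAt_iff_tendsto_slope_zero.1 hd

lemma slope_mgf_zero_eq_integral [IsFiniteMeasure μ] (hX : AEMeasurable X μ) (h0 : 0 ≤ᵐ[μ] X)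
    {t : ℝ} (ht : t ≤ 0) : slope (mgf X μ) 0 t = ∫ ω, (exp (t * X ω) - 1) / t ∂μ := by
  rw [slope_def_field, integral_div, integral_sub
    (integrable_exp_mul_of_nonneg_of_nonpos hX h0 ht) (integrable_const 1)]
  simp [mgf]

/-- No exponential moment is needed: for `t < 0` the slopes are dominated by `X` itself. -/
lemma hasDerivWithinAt_mgf_Iio_zero [IsFiniteMeasure μ] (hX : Integrable X μ) (h0 : 0 ≤ᵐ[μ] X) :
    HasDerivWithinAt (mgf X μ) μ[X] (Set.Iio 0) 0 := by
  rw [hasDerivWithinAt_iff_tendsto_slope' Set.self_notMem_Iio]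
  have hslope : ∀ᶠ t in 𝓝[<] (0 : ℝ),
      ∫ ω, (exp (t * X ω) - 1) / t ∂μ = slope (mgf X μ) 0 t := by
    filter_upwards [self_mem_nhdsWithin] with t ht
    exact (slope_mgf_zero_eq_integral hX.aemeasurable h0 (le_of_lt ht)).symm
  refine Tendsto.congr' hslope (tendsto_integral_filter_of_dominated_convergence X ?_ ?_ hX ?_)
  · exact Eventually.of_forall fun t =>
      ((measurable_exp.comp_aemeasurable (hX.aemeasurable.const_mul t)).sub_const 1).div_const t
        |>.aestronglyMeasurable
  · filter_upwards [self_mem_nhdsWithin] with t ht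
    filter_upwards [h0] with ω hω
    exact abs_exp_mul_sub_one_div_le ht hω
  · exact Eventually.of_forall fun ω =>
      (tendsto_exp_mul_sub_one_div (X ω)).mono_left (nhdsWithin_mono _ fun t ht => ne_of_lt ht)

lemma hasDerivWithinAt_cgf_Iio_zero [IsProbabilityMeasure μ] (hX : Integrable X μ)
    (h0 : 0 ≤ᵐ[μ] X) : HasDerivWithinAt (cgf X μ) μ[X] (Set.Iio 0) 0 := by
  have hlog : HasDerivAt log 1 (mgf X μ 0) := by
    simpa [mgf_zero] using hasDerivAt_log (one_ne_zero (α := ℝ))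
  have h := hlog.comp_hasDerivWithinAt 0 (hasDerivWithinAt_mgf_Iio_zero hX h0)
  rwa [one_mul] at h

lemma prod_mgf_eq_exp_sum_cgf [IsProbabilityMeasure μ] (hX : AEMeasurable X μ) (h0 : 0 ≤ᵐ[μ] X)
    {ι : Type*} {s : Finset ι} {t : ι → ℝ} (ht : ∀ i ∈ s, t i ≤ 0) :
    ∏ i ∈ s, mgf X μ (t i) = exp (∑ i ∈ s, cgf X μ (t i)) := by
  rw [exp_sum]
  exact prod_congr rfl fun i hi =>
    (exp_cgf (integrable_exp_mul_of_nonneg_of_nonpos hX h0 (ht i hi))).symm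

noncomputable def queueTail (X : Ω → ℝ) (μ : Measure Ω) (ρ : ℝ) (k : ℕ) : ℝ :=
  ((1 - ∫ ω, exp (-(k : ℝ) * X ω / ρ) ∂μ) / ((k : ℝ) / ρ)) *
    ∏ i ∈ Icc 1 (k - 1), ∫ ω, exp (-(i : ℝ) * X ω / ρ) ∂μ

lemma queueTail_eq [IsProbabilityMeasure μ] (hX : AEMeasurable X μ) (h0 : 0 ≤ᵐ[μ] X) {ρ : ℝ}
    (hρ : 0 ≤ ρ) (k : ℕ) :
    queueTail X μ ρ k =
      slope (mgf X μ) 0 (k * -ρ⁻¹) * exp (∑ i ∈ Icc 1 (k - 1), cgf X μ (i * -ρ⁻¹)) := by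
  have hmgf (c : ℝ) : ∫ ω, exp (-c * X ω / ρ) ∂μ = mgf X μ (c * -ρ⁻¹) := by
    simp only [mgf]
    congr 1
    ext ω
    ring_nf
  rw [queueTail]
  simp only [hmgf]
  rw [prod_mgf_eq_exp_sum_cgf hX h0 fun i _ =>
      mul_nonpos_of_nonneg_of_nonpos i.cast_nonneg (neg_nonpos.2 (inv_nonneg.2 hρ)),
    slope_def_field, mgf_zero, sub_zero, ← neg_div_neg_eq, neg_sub, mul_neg,
    div_eq_mul_inv (k : ℝ)]

lemma tendsto_queueTail_natCeil_mul_sqrt [IsProbabilityMeasure μ] (hX : Integrable X μ)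
    (h0 : 0 ≤ᵐ[μ] X) {x : ℝ} (hx : 0 < x) :
    Tendsto (fun ρ => queueTail X μ ρ ⌈x * √ρ⌉₊) atTop
      (𝓝 (μ[X] * exp (μ[X] * (-x ^ 2 / 2)))) := by
  have hkh : Tendsto (fun ρ => (⌈x * √ρ⌉₊ : ℝ) * -ρ⁻¹) atTop (𝓝 0) := by
    simpa [div_eq_mul_inv] using (tendsto_natCeil_mul_sqrt_div hx.le).neg
  have hk2h : Tendsto (fun ρ => (⌈x * √ρ⌉₊ : ℝ) ^ 2 * -ρ⁻¹) atTop (𝓝 (-x ^ 2)) := by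
    simpa [div_eq_mul_inv] using (tendsto_natCeil_mul_sqrt_sq_div hx.le).neg
  have hneg : ∀ᶠ ρ in atTop, (⌈x * √ρ⌉₊ : ℝ) * -ρ⁻¹ ∈ Set.Iio 0 := by
    filter_upwards [eventually_gt_atTop 0] with ρ hρ
    have hk : (1 : ℝ) ≤ ⌈x * √ρ⌉₊ := by exact_mod_cast Nat.one_le_ceil_iff.2 (by positivity)
    exact mul_neg_of_pos_of_neg (by linarith) (neg_neg_of_pos (inv_pos.2 hρ))
  have hslope := ((hasDerivWithinAt_iff_tendsto_slope' Set.self_notMem_Iio).1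
    (hasDerivWithinAt_mgf_Iio_zero hX h0)).comp (tendsto_nhdsWithin_iff.2 ⟨hkh, hneg⟩)
  have hsum := tendsto_sum_Icc_comp_nat_mul (hasDerivWithinAt_cgf_Iio_zero hX h0) cgf_zero
    ((eventually_gt_atTop 0).mono fun ρ hρ => neg_neg_of_pos (inv_pos.2 hρ)) hkh hk2h
  refine (hslope.mul ((continuous_exp.tendsto _).comp hsum)).congr' ?_
  filter_upwards [eventually_ge_atTop 0] with ρ hρ
  exact (queueTail_eq hX.aemeasurable h0 hρ _).symm

end MomentGeneratingFunction

theorem stationary_queue_rayleigh_limit_general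
    {Ω : Type*} [MeasureSpace Ω] [IsProbabilityMeasure (ℙ : Measure Ω)]
    (Atil : Ω → ℝ) (hnonneg : ∀ ω, 0 ≤ Atil ω)
    (hint : Integrable Atil ℙ) (hmean : ∫ ω, Atil ω ∂ℙ = 1)
    (Q : ℝ → Ω → ℕ)
    (hQtail : ∀ ρ : ℝ, 0 < ρ → ∀ k : ℕ, 1 ≤ k →
      (ℙ {ω | k ≤ Q ρ ω}).toReal
        = ((1 - ∫ ω, Real.exp (-(k : ℝ) * Atil ω / ρ) ∂ℙ) / ((k : ℝ) / ρ))
            * ∏ i ∈ Finset.Icc 1 (k - 1), ∫ ω, Real.exp (-(i : ℝ) * Atil ω / ρ) ∂ℙ) :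
    ∀ x : ℝ, 0 < x →
      Tendsto (fun ρ : ℝ => (ℙ {ω | x ≤ (Q ρ ω : ℝ) / Real.sqrt ρ}).toReal)
        atTop (nhds (Real.exp (-x ^ 2 / 2))) := by
  intro x hx
  have hlim := tendsto_queueTail_natCeil_mul_sqrt hint (ae_of_all _ hnonneg) hx
  rw [hmean, one_mul, one_mul] at hlim
  refine hlim.congr' ?_
  filter_upwards [eventually_gt_atTop 0] with ρ hρ
  have hset : {ω | x ≤ (Q ρ ω : ℝ) / √ρ} = {ω | ⌈x * √ρ⌉₊ ≤ Q ρ ω} := by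
    ext ω
    simp [le_div_iff₀ (sqrt_pos.2 hρ), Nat.ceil_le]
  rw [hset, hQtail ρ hρ _ (Nat.one_le_ceil_iff.2 (by positivity))]
  rfl

/-- For the stationary queue length `Q ρ` with tail
`P(Q_ρ ≥ k) = ((1 - 𝔼 e^{-kÃ/ρ})/(k/ρ)) ∏_{i=1}^{k-1} 𝔼 e^{-iÃ/ρ}`, where `Ã ≥ 0`
has mean 1 and `P(Ã > 0) > 0`, one has `P(Q_ρ/√ρ ≥ x) → e^{-x²/2}` for each `x > 0`. -/
theorem stationary_queue_rayleigh_limit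
    {Ω : Type*} [MeasureSpace Ω] [IsProbabilityMeasure (ℙ : Measure Ω)]
    (Atil : Ω → ℝ) (hmeas : Measurable Atil) (hnonneg : ∀ ω, 0 ≤ Atil ω)
    (hint : Integrable Atil ℙ) (hmean : ∫ ω, Atil ω ∂ℙ = 1)
    (hpos : 0 < ℙ {ω | 0 < Atil ω})
    (Q : ℝ → Ω → ℕ) (hQmeas : ∀ ρ, Measurable (Q ρ))
    (hQtail : ∀ ρ : ℝ, 0 < ρ → ∀ k : ℕ, 1 ≤ k →
      (ℙ {ω | k ≤ Q ρ ω}).toReal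
        = ((1 - ∫ ω, Real.exp (-(k : ℝ) * Atil ω / ρ) ∂ℙ) / ((k : ℝ) / ρ))
            * ∏ i ∈ Finset.Icc 1 (k - 1), ∫ ω, Real.exp (-(i : ℝ) * Atil ω / ρ) ∂ℙ) :
    ∀ x : ℝ, 0 < x →
      Tendsto (fun ρ : ℝ => (ℙ {ω | x ≤ (Q ρ ω : ℝ) / Real.sqrt ρ}).toReal)
        atTop (nhds (Real.exp (-x ^ 2 / 2))) :=
  stationary_queue_rayleigh_limit_general Atil hnonneg hint hmean Q hQtail
end

section
/- Let à have mean 1 and P(Ã > 0) > 0, μ = μ(ρ), and consider i exponentials with rate 1/ρ relative to Ã: define for i ≥ 1 the ratio R_i(ρ) := [i·E[(1 − e^{−Ã/ρ}) e^{−(i−1)Ã/ρ}]] / E[1 − e^{−iÃ/ρ}]. Then for any 0 < m < M, both min_{m√ρ ≤ i ≤ M√ρ} R_i(ρ) and max_{m√ρ ≤ i ≤ M√ρ} R_i(ρ) converge to 1 as ρ → ∞. -/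
/-!
With `u = Ã/ρ`, the elementary bounds `u e^{-u} ≤ 1 - e^{-u} ≤ u` squeeze the numerator of
`R_i(ρ)` between `G/ρ` and `1/ρ` and its denominator between `iG/ρ` and `i/ρ`, where
`G = 𝔼[Ã e^{-iÃ/ρ}]`; hence `G ≤ R_i(ρ) ≤ 1/G`. For `i ≤ M√ρ` the rate `i/ρ` is at most
`M/√ρ`, so `G ≥ 𝔼[Ã e^{-MÃ/√ρ}]`, a bound independent of `i` that tends to `𝔼[Ã] = 1` by
dominated convergence.
-/

open MeasureTheory ProbabilityTheory Filter Real Set Topology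

lemma mul_exp_neg_le_one_sub_exp_neg (x : ℝ) : x * exp (-x) ≤ 1 - exp (-x) := by
  have h : (x + 1) * exp (-x) ≤ exp x * exp (-x) :=
    mul_le_mul_of_nonneg_right (add_one_le_exp x) (exp_pos _).le
  rw [← exp_add, add_neg_cancel, exp_zero] at h
  linarith

lemma one_sub_exp_neg_le (x : ℝ) : 1 - exp (-x) ≤ x := by
  linarith [one_sub_le_exp_neg x]

lemma one_sub_exp_neg_mul_exp_mem_Icc {x k ρ : ℝ} (hx : 0 ≤ x) (hρ : 0 < ρ) (hk : 1 ≤ k) :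
    (1 - exp (-x / ρ)) * exp (-(k - 1) * x / ρ) ∈ Icc (x * exp (-(k / ρ * x)) / ρ) (x / ρ) := by
  set u := x / ρ
  have hu : 0 ≤ u := by positivity
  have e₁ : -x / ρ = -u := by ring
  have e₂ : -(k - 1) * x / ρ = -((k - 1) * u) := by ring
  have e₃ : x * exp (-(k / ρ * x)) / ρ = u * exp (-u) * exp (-((k - 1) * u)) := by
    rw [mul_assoc, ← exp_add]; simp only [u]; ring_nf
  rw [e₁, e₂, e₃]
  have hdecay : exp (-((k - 1) * u)) ≤ 1 := exp_le_one_iff.2 (by nlinarith)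
  have hgap : 0 ≤ 1 - exp (-u) := by linarith [exp_le_one_iff.2 (neg_nonpos.2 hu)]
  constructor
  · exact mul_le_mul_of_nonneg_right (mul_exp_neg_le_one_sub_exp_neg u) (exp_pos _).le
  · calc (1 - exp (-u)) * exp (-((k - 1) * u)) ≤ 1 - exp (-u) := mul_le_of_le_one_right hgap hdecay
      _ ≤ u := one_sub_exp_neg_le u

lemma one_sub_exp_neg_mem_Icc (x k ρ : ℝ) :
    1 - exp (-k * x / ρ) ∈ Icc (k * (x * exp (-(k / ρ * x))) / ρ) (k * x / ρ) := by
  have e₁ : -k * x / ρ = -(k * x / ρ) := by ring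
  have e₂ : k * (x * exp (-(k / ρ * x))) / ρ = k * x / ρ * exp (-(k * x / ρ)) := by ring_nf
  rw [e₁, e₂]
  exact ⟨mul_exp_neg_le_one_sub_exp_neg _, one_sub_exp_neg_le _⟩

lemma div_le_div_sqrt_of_le_mul_sqrt {x c ρ : ℝ} (hρ : 0 < ρ) (h : x ≤ c * √ρ) :
    x / ρ ≤ c / √ρ := by
  have hs : 0 < √ρ := sqrt_pos.2 hρ
  calc x / ρ ≤ c * √ρ / ρ := by gcongr
    _ = c / √ρ := by
      rw [div_eq_div_iff hρ.ne' hs.ne', mul_assoc, mul_self_sqrt hρ.le]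

lemma norm_mul_exp_neg_mul_le {x s : ℝ} (hx : 0 ≤ x) (hs : 0 ≤ s) : ‖x * exp (-(s * x))‖ ≤ x := by
  rw [norm_of_nonneg (by positivity)]
  exact mul_le_of_le_one_right hx (exp_le_one_iff.2 (by nlinarith))

section

variable {Ω : Type*} [MeasurableSpace Ω] {μ : Measure Ω} {X : Ω → ℝ}

lemma integrable_mul_exp_neg_mul (hX : ∀ ω, 0 ≤ X ω) (hint : Integrable X μ) {s : ℝ}
    (hs : 0 ≤ s) : Integrable (fun ω => X ω * exp (-(s * X ω))) μ :=
  hint.mono' (by fun_prop) (ae_of_all _ fun ω => norm_mul_exp_neg_mul_le (hX ω) hs)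

lemma antitoneOn_integral_mul_exp_neg_mul (hX : ∀ ω, 0 ≤ X ω) (hint : Integrable X μ) :
    AntitoneOn (fun s => ∫ ω, X ω * exp (-(s * X ω)) ∂μ) (Ici 0) := by
  intro a ha b hb hab
  refine integral_mono (integrable_mul_exp_neg_mul hX hint hb)
    (integrable_mul_exp_neg_mul hX hint ha) fun ω => ?_
  have := hX ω
  gcongr

lemma tendsto_integral_mul_exp_neg_mul (hX : ∀ ω, 0 ≤ X ω) (hint : Integrable X μ) :
    Tendsto (fun s => ∫ ω, X ω * exp (-(s * X ω)) ∂μ) (𝓝[≥] 0) (𝓝 (∫ ω, X ω ∂μ)) := by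
  refine tendsto_integral_filter_of_dominated_convergence X
    (Eventually.of_forall fun _ => by fun_prop) ?_ hint (ae_of_all _ fun ω => ?_)
  · filter_upwards [self_mem_nhdsWithin] with s hs
    exact ae_of_all _ fun ω => norm_mul_exp_neg_mul_le (hX ω) hs
  · have hc : Continuous fun s : ℝ => X ω * exp (-(s * X ω)) := by fun_prop
    simpa using hc.continuousWithinAt (s := Ici 0) (x := 0) |>.tendsto

lemma integral_one_sub_exp_neg_mul_exp_mem_Icc (hX : ∀ ω, 0 ≤ X ω) (hint : Integrable X μ)
    {k ρ : ℝ} (hρ : 0 < ρ) (hk : 1 ≤ k) :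
    ∫ ω, (1 - exp (-X ω / ρ)) * exp (-(k - 1) * X ω / ρ) ∂μ ∈
      Icc ((∫ ω, X ω * exp (-(k / ρ * X ω)) ∂μ) / ρ) ((∫ ω, X ω ∂μ) / ρ) := by
  have hpt := fun ω => one_sub_exp_neg_mul_exp_mem_Icc (hX ω) hρ hk
  have hG := (integrable_mul_exp_neg_mul hX hint (by positivity : 0 ≤ k / ρ)).div_const ρ
  have hN : Integrable (fun ω => (1 - exp (-X ω / ρ)) * exp (-(k - 1) * X ω / ρ)) μ := by
    refine (hint.div_const ρ).mono' (by fun_prop) (ae_of_all _ fun ω => ?_)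
    have := hX ω
    rw [norm_of_nonneg ((by positivity : 0 ≤ X ω * exp (-(k / ρ * X ω)) / ρ).trans (hpt ω).1)]
    exact (hpt ω).2
  rw [← integral_div, ← integral_div]
  exact ⟨integral_mono hG hN fun ω => (hpt ω).1,
    integral_mono hN (hint.div_const ρ) fun ω => (hpt ω).2⟩

lemma integral_one_sub_exp_neg_mem_Icc (hX : ∀ ω, 0 ≤ X ω) (hint : Integrable X μ)
    {k ρ : ℝ} (hρ : 0 < ρ) (hk : 0 ≤ k) :
    ∫ ω, (1 - exp (-k * X ω / ρ)) ∂μ ∈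
      Icc (k * (∫ ω, X ω * exp (-(k / ρ * X ω)) ∂μ) / ρ) (k * (∫ ω, X ω ∂μ) / ρ) := by
  have hpt := fun ω => one_sub_exp_neg_mem_Icc (X ω) k ρ
  have hG :=
    ((integrable_mul_exp_neg_mul hX hint (by positivity : 0 ≤ k / ρ)).const_mul k).div_const ρ
  have hX' := (hint.const_mul k).div_const ρ
  have hD : Integrable (fun ω => 1 - exp (-k * X ω / ρ)) μ := by
    refine hX'.mono' (by fun_prop) (ae_of_all _ fun ω => ?_)
    have := hX ω
    rw [norm_of_nonneg ((by positivity : 0 ≤ k * (X ω * exp (-(k / ρ * X ω))) / ρ).trans (hpt ω).1)]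
    exact (hpt ω).2
  rw [← integral_const_mul, ← integral_const_mul, ← integral_div, ← integral_div]
  exact ⟨integral_mono hG hD fun ω => (hpt ω).1, integral_mono hD hX' fun ω => (hpt ω).2⟩

lemma mul_integral_div_integral_mem_Icc (hX : ∀ ω, 0 ≤ X ω) (hint : Integrable X μ)
    {k ρ : ℝ} (hρ : 0 < ρ) (hk : 1 ≤ k) (hG : 0 < ∫ ω, X ω * exp (-(k / ρ * X ω)) ∂μ) :
    k * (∫ ω, (1 - exp (-X ω / ρ)) * exp (-(k - 1) * X ω / ρ) ∂μ) /
        ∫ ω, (1 - exp (-k * X ω / ρ)) ∂μ ∈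
      Icc ((∫ ω, X ω * exp (-(k / ρ * X ω)) ∂μ) / ∫ ω, X ω ∂μ)
        ((∫ ω, X ω ∂μ) / ∫ ω, X ω * exp (-(k / ρ * X ω)) ∂μ) := by
  obtain ⟨hN₁, hN₂⟩ := integral_one_sub_exp_neg_mul_exp_mem_Icc hX hint hρ hk
  obtain ⟨hD₁, hD₂⟩ := integral_one_sub_exp_neg_mem_Icc hX hint hρ (zero_le_one.trans hk)
  set G := ∫ ω, X ω * exp (-(k / ρ * X ω)) ∂μ
  set N := ∫ ω, (1 - exp (-X ω / ρ)) * exp (-(k - 1) * X ω / ρ) ∂μ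
  set D := ∫ ω, (1 - exp (-k * X ω / ρ)) ∂μ
  set m := ∫ ω, X ω ∂μ
  have hk₀ : 0 < k := zero_lt_one.trans_le hk
  have hm : 0 < m :=
    hG.trans_le ((div_le_div_iff_of_pos_right hρ).1 (hN₁.trans hN₂))
  have hD : 0 < D := (by positivity : 0 < k * G / ρ).trans_le hD₁
  constructor
  · rw [div_le_div_iff₀ hm hD]
    calc G * D ≤ G * (k * m / ρ) := by gcongr
      _ = k * (G / ρ) * m := by ring
      _ ≤ k * N * m := by gcongr
  · rw [div_le_div_iff₀ hD hG]
    calc k * N * G ≤ k * (m / ρ) * G := by gcongr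
      _ = m * (k * G / ρ) := by ring
      _ ≤ m * D := by gcongr

end

theorem unique_service_completion_limit_general
    {Ω : Type*} [MeasureSpace Ω]
    (Atil : Ω → ℝ) (hnonneg : ∀ ω, 0 ≤ Atil ω)
    (hint : Integrable Atil ℙ) (hmean : ∫ ω, Atil ω ∂ℙ = 1)
    (R : ℕ → ℝ → ℝ)
    (hR : ∀ (i : ℕ) (ρ : ℝ), 0 < ρ → 1 ≤ i →
      R i ρ = ((i : ℝ) * ∫ ω, (1 - Real.exp (-Atil ω / ρ))
                  * Real.exp (-((i : ℝ) - 1) * Atil ω / ρ) ∂ℙ)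
              / ∫ ω, (1 - Real.exp (-(i : ℝ) * Atil ω / ρ)) ∂ℙ)
    (m M : ℝ) (hm : 0 < m) (hmM : m < M) :
    ∀ ε : ℝ, 0 < ε → ∀ᶠ ρ : ℝ in atTop, ∀ i : ℕ,
      m * Real.sqrt ρ ≤ (i : ℝ) → (i : ℝ) ≤ M * Real.sqrt ρ →
        |R i ρ - 1| < ε := by
  intro ε hε
  have hM : 0 < M := hm.trans hmM
  set g := fun ρ : ℝ => ∫ ω, Atil ω * exp (-(M / √ρ * Atil ω)) ∂ℙ
  have hrate : Tendsto (fun ρ : ℝ => M / √ρ) atTop (𝓝[≥] 0) :=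
    tendsto_nhdsWithin_iff.2 ⟨tendsto_const_nhds.div_atTop tendsto_sqrt_atTop,
      Eventually.of_forall fun ρ => div_nonneg hM.le (sqrt_nonneg ρ)⟩
  have hg : Tendsto g atTop (𝓝 1) :=
    hmean ▸ (tendsto_integral_mul_exp_neg_mul hnonneg hint).comp hrate
  filter_upwards [hg.eventually (lt_mem_nhds (by linarith : 1 - ε < 1)),
    hg.eventually (lt_mem_nhds one_pos),
    (hg.inv₀ one_ne_zero).eventually (gt_mem_nhds (by rw [inv_one]; linarith : (1 : ℝ)⁻¹ < 1 + ε)),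
    (tendsto_sqrt_atTop.const_mul_atTop hm).eventually_ge_atTop 1, eventually_gt_atTop 0]
    with ρ hg_lo hg_pos hg_hi hm_one hρ
  intro i hi_lo hi_hi
  have hi : 1 ≤ i := by exact_mod_cast hm_one.trans hi_lo
  have hGg : g ρ ≤ ∫ ω, Atil ω * exp (-((i : ℝ) / ρ * Atil ω)) ∂ℙ :=
    antitoneOn_integral_mul_exp_neg_mul hnonneg hint (by positivity : (0 : ℝ) ≤ i / ρ)
      (by positivity : 0 ≤ M / √ρ) (div_le_div_sqrt_of_le_mul_sqrt hρ hi_hi)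
  obtain ⟨hR_lo, hR_hi⟩ := mul_integral_div_integral_mem_Icc hnonneg hint hρ
    (Nat.one_le_cast.2 hi) (hg_pos.trans_le hGg)
  rw [hmean, div_one] at hR_lo
  rw [hmean, one_div] at hR_hi
  have := inv_anti₀ hg_pos hGg
  rw [hR i ρ hρ hi, abs_sub_lt_iff]
  constructor <;> linarith

/-- For `Ã ≥ 0` with mean 1 and `P(Ã > 0) > 0`, the ratios
`R_i(ρ) = i·𝔼[(1 - e^{-Ã/ρ}) e^{-(i-1)Ã/ρ}] / 𝔼[1 - e^{-iÃ/ρ}]` converge to 1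
uniformly over `m√ρ ≤ i ≤ M√ρ` as `ρ → ∞` (hence both the min and the max over
that range tend to 1). -/
theorem unique_service_completion_limit
    {Ω : Type*} [MeasureSpace Ω] [IsProbabilityMeasure (ℙ : Measure Ω)]
    (Atil : Ω → ℝ) (hmeas : Measurable Atil) (hnonneg : ∀ ω, 0 ≤ Atil ω)
    (hint : Integrable Atil ℙ) (hmean : ∫ ω, Atil ω ∂ℙ = 1)
    (hpos : 0 < ℙ {ω | 0 < Atil ω})
    (R : ℕ → ℝ → ℝ)
    (hR : ∀ (i : ℕ) (ρ : ℝ), 0 < ρ → 1 ≤ i →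
      R i ρ = ((i : ℝ) * ∫ ω, (1 - Real.exp (-Atil ω / ρ))
                  * Real.exp (-((i : ℝ) - 1) * Atil ω / ρ) ∂ℙ)
              / ∫ ω, (1 - Real.exp (-(i : ℝ) * Atil ω / ρ)) ∂ℙ)
    (m M : ℝ) (hm : 0 < m) (hmM : m < M) :
    ∀ ε : ℝ, 0 < ε → ∀ᶠ ρ : ℝ in atTop, ∀ i : ℕ,
      m * Real.sqrt ρ ≤ (i : ℝ) → (i : ℝ) ≤ M * Real.sqrt ρ →
        |R i ρ - 1| < ε :=
  unique_service_completion_limit_general Atil hnonneg hint hmean R hR m M hm hmM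
end

section
/- Every twice-differentiable probability density f on (0,∞) with finite mean solving the ODE f''(x) + x f'(x) + f(x) = 0 equals f(x) = √(2/π) e^{−x²/2}. More precisely: the general solution of f'' + x f' + f = 0 on (0,∞) is C₁ e^{−x²/2} + C₂ D(x/√2) where D(x) = e^{−x²}∫_0^x e^{u²}du is the Dawson function; since D(x) ~ 1/(2x) as x → ∞, any solution that is integrable with finite first moment over (0,∞) must have C₂ = 0, and normalization forces C₁ = √(2/π). -/
/-!
The equation is exact: `f'' + x f' + f = (f' + x f)'`, so `f' + x f` equals a constant `c` on
`(0,∞)`. Integrating `f' = c - x f` from `1` to `T` gives `f T = f 1 + c (T - 1) - ∫₁ᵀ x f`,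
where the last integral lies between `0` and the mean. So `c < 0` would make `f` eventually
negative and `c > 0` would make `f ≥ 1` eventually, contradicting integrability. Once `c = 0`,
`f e^{x²/2}` is constant, and the Gaussian integral determines the constant.
-/

open MeasureTheory Set Real

theorem IsOpen.exists_eq_of_hasDerivAt_zero {s : Set ℝ} {g : ℝ → ℝ} (hs : IsOpen s)
    (hs' : IsPreconnected s) (hg : ∀ x ∈ s, HasDerivAt g 0 x) : ∃ C, ∀ x ∈ s, g x = C :=
  hs.exists_is_const_of_deriv_eq_zero hs'
    (fun x hx => (hg x hx).differentiableAt.differentiableWithinAt) fun x hx => (hg x hx).deriv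

theorem not_integrableOn_Ioi_of_forall_le {f : ℝ → ℝ} {a ε : ℝ} (hε : 0 < ε)
    (hf : ∀ x ∈ Ioi a, ε ≤ f x) : ¬IntegrableOn f (Ioi a) := by
  intro hint
  have hconst : IntegrableOn (fun _ => ε) (Ioi a) := by
    refine hint.mono' aestronglyMeasurable_const ?_
    filter_upwards [ae_restrict_mem measurableSet_Ioi] with x hx
    rw [norm_of_nonneg hε.le]
    exact hf x hx
  simp [integrableOn_const_iff, hε.ne'] at hconst

theorem exists_deriv_add_mul_self_eq_const {f f' f'' : ℝ → ℝ}
    (hf : ∀ x ∈ Ioi (0 : ℝ), HasDerivAt f (f' x) x)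
    (hf' : ∀ x ∈ Ioi (0 : ℝ), HasDerivAt f' (f'' x) x)
    (hode : ∀ x ∈ Ioi (0 : ℝ), f'' x + x * f' x + f x = 0) :
    ∃ c, ∀ x ∈ Ioi (0 : ℝ), f' x + x * f x = c := by
  refine isOpen_Ioi.exists_eq_of_hasDerivAt_zero isPreconnected_Ioi fun x hx => ?_
  have hderiv : HasDerivAt (fun x => f' x + x * f x) (f'' x + (1 * f x + x * f' x)) x :=
    (hf' x hx).add ((hasDerivAt_id' x).mul (hf x hx))
  convert hderiv using 1
  linarith [hode x hx]

section FirstIntegral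

variable {f f' : ℝ → ℝ} {c : ℝ} (hf : ∀ x ∈ Ioi (0 : ℝ), HasDerivAt f (f' x) x)
  (hc : ∀ x ∈ Ioi (0 : ℝ), f' x + x * f x = c)
include hf hc

theorem eq_add_mul_sub_integral_mul_self {a T : ℝ} (ha : 0 < a) (haT : a ≤ T) :
    f T = f a + c * (T - a) - ∫ x in a..T, x * f x := by
  have hsub : uIcc a T ⊆ Ioi 0 := by
    rw [uIcc_of_le haT]
    exact fun x hx => ha.trans_le hx.1
  have hf'_eq : EqOn f' (fun x => c - x * f x) (uIcc a T) := fun x hx => by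
    linarith [hc x (hsub hx)]
  have hcont : ContinuousOn (fun x => x * f x) (uIcc a T) :=
    continuousOn_id.mul fun x hx => (hf x (hsub hx)).continuousAt.continuousWithinAt
  have hftc : ∫ x in a..T, f' x = f T - f a :=
    intervalIntegral.integral_eq_sub_of_hasDerivAt (fun x hx => hf x (hsub hx))
      ((continuousOn_const.sub hcont).congr hf'_eq).intervalIntegrable
  rw [intervalIntegral.integral_congr hf'_eq, intervalIntegral.integral_sub
    intervalIntegrable_const hcont.intervalIntegrable, intervalIntegral.integral_const,
    smul_eq_mul] at hftc
  linarith

theorem const_nonneg_of_nonneg (hnonneg : ∀ x ∈ Ioi (0 : ℝ), 0 ≤ f x) : 0 ≤ c := by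
  by_contra! hneg
  set T := 1 + (f 1 + 1) / -c
  have hf1 : 0 ≤ f 1 := hnonneg 1 (mem_Ioi.2 one_pos)
  have hT : 1 ≤ T := le_add_of_nonneg_right (div_nonneg (by linarith) (by linarith))
  have hI : 0 ≤ ∫ x in (1 : ℝ)..T, x * f x :=
    intervalIntegral.integral_nonneg hT fun x hx =>
      mul_nonneg (by linarith [hx.1]) (hnonneg x (one_pos.trans_le hx.1))
  have hcT : c * (T - 1) = -(f 1 + 1) := by
    simp only [T]
    field_simp [hneg.ne]
    ring
  linarith [eq_add_mul_sub_integral_mul_self hf hc one_pos hT, hnonneg T (one_pos.trans_le hT)]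

theorem const_nonpos_of_integrableOn (hnonneg : ∀ x ∈ Ioi (0 : ℝ), 0 ≤ f x)
    (hint : IntegrableOn f (Ioi 0)) (hmean : IntegrableOn (fun x => x * f x) (Ioi 0)) :
    c ≤ 0 := by
  by_contra! hpos
  set M := ∫ x in Ioi (0 : ℝ), x * f x
  have hM : 0 ≤ M :=
    setIntegral_nonneg measurableSet_Ioi fun x hx => mul_nonneg hx.le (hnonneg x hx)
  have hlarge : ∀ T ∈ Ioi (1 + (M + 1) / c), 1 ≤ f T := by
    intro T hT
    have hT1 : 1 ≤ T := (le_add_of_nonneg_right (by positivity)).trans hT.le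
    have hIM : ∫ x in (1 : ℝ)..T, x * f x ≤ M := by
      rw [intervalIntegral.integral_of_le hT1]
      refine setIntegral_mono_set hmean ?_
        (Filter.Eventually.of_forall fun x hx => one_pos.trans hx.1)
      filter_upwards [ae_restrict_mem measurableSet_Ioi] with x hx
      exact mul_nonneg hx.le (hnonneg x hx)
    have hcT : M + 1 ≤ c * (T - 1) := by
      have := (div_lt_iff₀ hpos).1 (by linarith [mem_Ioi.1 hT] : (M + 1) / c < T - 1)
      linarith
    linarith [eq_add_mul_sub_integral_mul_self hf hc one_pos hT1, hnonneg 1 (mem_Ioi.2 one_pos)]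
  exact not_integrableOn_Ioi_of_forall_le one_pos hlarge
    (hint.mono_set (Ioi_subset_Ioi (by positivity)))

end FirstIntegral

theorem exists_eq_mul_exp_of_deriv_add_mul_self_eq_zero {f f' : ℝ → ℝ}
    (hf : ∀ x ∈ Ioi (0 : ℝ), HasDerivAt f (f' x) x)
    (hf' : ∀ x ∈ Ioi (0 : ℝ), f' x + x * f x = 0) :
    ∃ A, ∀ x ∈ Ioi (0 : ℝ), f x = A * exp (-x ^ 2 / 2) := by
  obtain ⟨A, hA⟩ : ∃ A, ∀ x ∈ Ioi (0 : ℝ), f x * exp (x ^ 2 / 2) = A := by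
    refine isOpen_Ioi.exists_eq_of_hasDerivAt_zero isPreconnected_Ioi fun x hx => ?_
    have hexp : HasDerivAt (fun x : ℝ => exp (x ^ 2 / 2)) (exp (x ^ 2 / 2) * x) x := by
      simpa using ((hasDerivAt_pow 2 x).div_const 2).exp
    have hprod : HasDerivAt (fun x => f x * exp (x ^ 2 / 2))
        (f' x * exp (x ^ 2 / 2) + f x * (exp (x ^ 2 / 2) * x)) x := (hf x hx).mul hexp
    convert hprod using 1
    linear_combination (-exp (x ^ 2 / 2)) * hf' x hx
  refine ⟨A, fun x hx => ?_⟩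
  rw [← hA x hx, mul_assoc, ← exp_add, neg_div, add_neg_cancel, exp_zero, mul_one]

theorem integral_exp_neg_sq_div_two_Ioi :
    ∫ x in Ioi (0 : ℝ), exp (-x ^ 2 / 2) = √(π / 2) := by
  convert integral_gaussian_Ioi (1 / 2) using 1
  · congr 1 with x
    ring_nf
  · rw [show π / (1 / 2) = π / 2 * 2 ^ 2 by ring, sqrt_mul (by positivity),
      sqrt_sq zero_le_two, mul_div_cancel_right₀ _ two_ne_zero]

theorem ode_density_unique_general
    (f f' f'' : ℝ → ℝ)
    (hderiv1 : ∀ x ∈ Set.Ioi (0 : ℝ), HasDerivAt f (f' x) x)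
    (hderiv2 : ∀ x ∈ Set.Ioi (0 : ℝ), HasDerivAt f' (f'' x) x)
    (hODE : ∀ x ∈ Set.Ioi (0 : ℝ), f'' x + x * f' x + f x = 0)
    (hnonneg : ∀ x ∈ Set.Ioi (0 : ℝ), 0 ≤ f x)
    (hprob : ∫ x in Set.Ioi (0 : ℝ), f x = 1)
    (hmean : IntegrableOn (fun x => x * f x) (Set.Ioi 0) volume) :
    ∀ x ∈ Set.Ioi (0 : ℝ),
      f x = Real.sqrt (2 / Real.pi) * Real.exp (-x ^ 2 / 2) := by
  obtain ⟨c, hc⟩ := exists_deriv_add_mul_self_eq_const hderiv1 hderiv2 hODE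
  have hint : IntegrableOn f (Ioi 0) := Integrable.of_integral_ne_zero (by simp [hprob])
  obtain rfl : c = 0 := le_antisymm (const_nonpos_of_integrableOn hderiv1 hc hnonneg hint hmean)
    (const_nonneg_of_nonneg hderiv1 hc hnonneg)
  obtain ⟨A, hA⟩ := exists_eq_mul_exp_of_deriv_add_mul_self_eq_zero hderiv1 hc
  have hA_mul : A * √(π / 2) = 1 := by
    rw [← hprob, ← integral_exp_neg_sq_div_two_Ioi, ← integral_const_mul]
    exact setIntegral_congr_fun measurableSet_Ioi fun x hx => (hA x hx).symm
  have hA_eq : A = √(2 / π) := by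
    rw [eq_inv_of_mul_eq_one_left hA_mul, ← sqrt_inv, inv_div]
  intro x hx
  rw [hA x hx, hA_eq]

/-- Any probability density `f` on `(0,∞)` with finite mean solving
`f'' + x f' + f = 0` on `(0,∞)` equals `√(2/π) e^{-x²/2}`. -/
theorem ode_density_unique
    (f f' f'' : ℝ → ℝ)
    (hderiv1 : ∀ x ∈ Set.Ioi (0 : ℝ), HasDerivAt f (f' x) x)
    (hderiv2 : ∀ x ∈ Set.Ioi (0 : ℝ), HasDerivAt f' (f'' x) x)
    (hODE : ∀ x ∈ Set.Ioi (0 : ℝ), f'' x + x * f' x + f x = 0)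
    (hnonneg : ∀ x ∈ Set.Ioi (0 : ℝ), 0 ≤ f x)
    (hprob : ∫ x in Set.Ioi (0 : ℝ), f x = 1)
    (hint : IntegrableOn f (Set.Ioi 0) volume)
    (hmean : IntegrableOn (fun x => x * f x) (Set.Ioi 0) volume) :
    ∀ x ∈ Set.Ioi (0 : ℝ),
      f x = Real.sqrt (2 / Real.pi) * Real.exp (-x ^ 2 / 2) :=
  ode_density_unique_general f f' f'' hderiv1 hderiv2 hODE hnonneg hprob hmean
end

section
/- Let ζ be Rayleigh (density x e^{−x²/2} on (0,∞)), ξ have density √(2/π) e^{−x²/2} on (0,∞), and η have density √(2/π) y² e^{−y²/2} on (0,∞), where conditionally on η = y, ξ is Uniform(0, y). Then for every measurable nonnegative function f, E[f(ζ)] = E[∫_ξ^η f(u) du] / E[η − ξ]; in particular for f(u) = 1_{u ≥ x} this yields P(ζ ≥ x) = e^{−x²/2} = E[(η − max(x, ξ))⁺] / E[η − ξ]. -/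
/-! Under the joint density `c y e^{-y²/2}` on `{0 < x < y}`, a point `u > 0` lies in `(ξ, η]`
exactly when `x < u ≤ y`, and integrating the density over that event gives `c u e^{-u²/2}`,
i.e. `c` times the Rayleigh density at `u`. By Tonelli, `𝔼[∫_ξ^η f] = c 𝔼[f(ζ)]` for every
`f ≥ 0`, and `f = 1` gives `𝔼[η - ξ] = c`. The law of `ζ` is identified from its tail, since a
finite measure on `ℝ` is determined by its values on the rays `[a, ∞)`. -/

open MeasureTheory ProbabilityTheory ENNReal Set Filter Topology

/-- `ENNReal.ofReal` truncates at `0`, so this vanishes on `u ≤ 0` without an indicator. -/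
noncomputable def rayleighDensity (u : ℝ) : ℝ≥0∞ :=
  ENNReal.ofReal (u * Real.exp (-u ^ 2 / 2))

noncomputable def cycleJointDensity (c : ℝ) (p : ℝ × ℝ) : ℝ≥0∞ :=
  ENNReal.ofReal (if 0 < p.1 ∧ p.1 < p.2 then c * p.2 * Real.exp (-p.2 ^ 2 / 2) else 0)

lemma measurable_rayleighDensity : Measurable rayleighDensity :=
  ENNReal.measurable_ofReal.comp (by fun_prop)

lemma measurable_cycleJointDensity (c : ℝ) : Measurable (cycleJointDensity c) := by
  refine ENNReal.measurable_ofReal.comp (Measurable.ite ?_ (by fun_prop) measurable_const)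
  exact (measurableSet_lt measurable_const measurable_fst).inter
    (measurableSet_lt measurable_fst measurable_snd)

lemma hasDerivAt_neg_exp_neg_sq_div_two (y : ℝ) :
    HasDerivAt (fun y : ℝ => -Real.exp (-y ^ 2 / 2)) (y * Real.exp (-y ^ 2 / 2)) y := by
  have h : HasDerivAt (fun y : ℝ => -y ^ 2 / 2) (-y) y := by
    simpa [neg_div] using (hasDerivAt_pow 2 y).neg.div_const 2
  exact ((Real.hasDerivAt_exp _).comp y h).neg.congr_deriv (by ring)

lemma tendsto_neg_exp_neg_sq_div_two_atTop :
    Tendsto (fun y : ℝ => -Real.exp (-y ^ 2 / 2)) atTop (𝓝 0) := by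
  have h : Tendsto (fun y : ℝ => -y ^ 2 / 2) atTop atBot := by
    simp only [neg_div]
    exact tendsto_neg_atTop_atBot.comp ((tendsto_pow_atTop two_ne_zero).atTop_div_const two_pos)
  simpa using (Real.tendsto_exp_atBot.comp h).neg

lemma setLIntegral_Ici_rayleighDensity {a : ℝ} (ha : 0 ≤ a) :
    ∫⁻ y in Ici a, rayleighDensity y = ENNReal.ofReal (Real.exp (-a ^ 2 / 2)) := by
  have hnonneg : ∀ y ∈ Ioi a, 0 ≤ y * Real.exp (-y ^ 2 / 2) := fun y hy =>
    mul_nonneg (ha.trans hy.le) (Real.exp_nonneg _)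
  have hderiv := fun y (_ : y ∈ Ici a) => hasDerivAt_neg_exp_neg_sq_div_two y
  rw [setLIntegral_congr Ioi_ae_eq_Ici.symm]
  simp only [rayleighDensity]
  rw [← ofReal_integral_eq_lintegral_ofReal
      (integrableOn_Ioi_deriv_of_nonneg' hderiv hnonneg tendsto_neg_exp_neg_sq_div_two_atTop)
      ((ae_restrict_mem measurableSet_Ioi).mono hnonneg),
    integral_Ioi_of_hasDerivAt_of_nonneg' hderiv hnonneg tendsto_neg_exp_neg_sq_div_two_atTop]
  simp

lemma support_rayleighDensity_subset : Function.support rayleighDensity ⊆ Ioi 0 := by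
  intro u hu
  by_contra h
  exact hu (ENNReal.ofReal_eq_zero.2 (mul_nonpos_of_nonpos_of_nonneg (not_lt.1 h)
    (Real.exp_nonneg _)))

lemma map_eq_withDensity_rayleighDensity {Ω : Type*} [MeasurableSpace Ω] (μ : Measure Ω)
    [IsProbabilityMeasure μ] {ζ : Ω → ℝ} (hζ : Measurable ζ) (hζnonneg : ∀ ω, 0 ≤ ζ ω)
    (hζtail : ∀ x : ℝ, 0 < x → μ {ω | x ≤ ζ ω} = ENNReal.ofReal (Real.exp (-x ^ 2 / 2))) :
    μ.map ζ = volume.withDensity rayleighDensity := by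
  have : IsProbabilityMeasure (μ.map ζ) := Measure.isProbabilityMeasure_map hζ.aemeasurable
  refine Measure.ext_of_Ici _ _ fun a => ?_
  rw [Measure.map_apply hζ measurableSet_Ici, withDensity_apply _ measurableSet_Ici]
  rcases lt_or_ge 0 a with ha | ha
  · rw [setLIntegral_Ici_rayleighDensity ha.le]
    exact hζtail a ha
  · have hsupp : ∀ b ≤ 0, Function.support rayleighDensity ⊆ Ici b := fun b hb =>
      support_rayleighDensity_subset.trans (Ioi_subset_Ici hb)
    rw [setLIntegral_eq_of_support_subset (hsupp a ha),
      ← setLIntegral_eq_of_support_subset (hsupp 0 le_rfl),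
      setLIntegral_Ici_rayleighDensity le_rfl,
      preimage_eq_univ_iff.2 fun _ ⟨ω, hω⟩ => hω ▸ ha.trans (hζnonneg ω)]
    simp

lemma measurable_indicator_Ioc_prod {f : ℝ → ℝ≥0∞} (hf : Measurable f) :
    Measurable fun q : (ℝ × ℝ) × ℝ => (Ioc q.1.1 q.1.2).indicator f q.2 :=
  (hf.comp measurable_snd).indicator (s := {q : (ℝ × ℝ) × ℝ | q.2 ∈ Ioc q.1.1 q.1.2})
    ((measurableSet_lt (by fun_prop) measurable_snd).inter
      (measurableSet_le measurable_snd (by fun_prop)))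

lemma measurable_setLIntegral_Ioc {f : ℝ → ℝ≥0∞} (hf : Measurable f) :
    Measurable fun p : ℝ × ℝ => ∫⁻ u in Ioc p.1 p.2, f u := by
  simp_rw [← lintegral_indicator measurableSet_Ioc]
  exact (measurable_indicator_Ioc_prod hf).lintegral_prod_right'

lemma measurableSet_mem_Ioc (u : ℝ) : MeasurableSet {p : ℝ × ℝ | u ∈ Ioc p.1 p.2} :=
  (measurableSet_lt measurable_fst measurable_const).inter
    (measurableSet_le measurable_const measurable_snd)

/-- On `{x < u ≤ y}` the constraint `0 < x < y` reduces to `0 < x < u`, so the density splits. -/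
lemma indicator_mem_Ioc_cycleJointDensity {c : ℝ} (hc : 0 ≤ c) (u : ℝ) (p : ℝ × ℝ) :
    {p : ℝ × ℝ | u ∈ Ioc p.1 p.2}.indicator (cycleJointDensity c) p
      = (Ioo 0 u).indicator 1 p.1
        * (Ici u).indicator (fun y => ENNReal.ofReal c * rayleighDensity y) p.2 := by
  obtain ⟨x, y⟩ := p
  by_cases hmem : x < u ∧ u ≤ y
  · obtain ⟨hxu, huy⟩ := hmem
    by_cases hx : 0 < x
    · simp [hx, hxu, huy, hxu.trans_le huy, cycleJointDensity, rayleighDensity, mul_assoc,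
        ENNReal.ofReal_mul hc]
    · simp [hx, cycleJointDensity]
  · rcases not_and_or.1 hmem with h | h <;> simp [h]

lemma setLIntegral_mem_Ioc_cycleJointDensity {c : ℝ} (hc : 0 ≤ c) (u : ℝ) :
    ∫⁻ p in {p : ℝ × ℝ | u ∈ Ioc p.1 p.2}, cycleJointDensity c p
      = ENNReal.ofReal c * rayleighDensity u := by
  rw [← lintegral_indicator (measurableSet_mem_Ioc u)]
  simp_rw [indicator_mem_Ioc_cycleJointDensity hc u]
  rw [Measure.volume_eq_prod,
    lintegral_prod_mul (measurable_one.indicator measurableSet_Ioo).aemeasurable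
      ((measurable_rayleighDensity.const_mul _).indicator measurableSet_Ici).aemeasurable,
    lintegral_indicator_one measurableSet_Ioo, lintegral_indicator measurableSet_Ici,
    lintegral_const_mul _ measurable_rayleighDensity, Real.volume_Ioo, sub_zero]
  rcases le_or_gt u 0 with hu | hu
  · simp [ENNReal.ofReal_eq_zero.2 hu, rayleighDensity,
      mul_nonpos_of_nonpos_of_nonneg hu (Real.exp_nonneg _)]
  · rw [setLIntegral_Ici_rayleighDensity hu.le, rayleighDensity, ENNReal.ofReal_mul hu.le]
    ring

lemma lintegral_setLIntegral_Ioc_withDensity_cycleJointDensity {c : ℝ} (hc : 0 ≤ c)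
    {f : ℝ → ℝ≥0∞} (hf : Measurable f) :
    ∫⁻ p, (∫⁻ u in Ioc p.1 p.2, f u) ∂(volume.withDensity (cycleJointDensity c))
      = ENNReal.ofReal c * ∫⁻ u, f u ∂(volume.withDensity rayleighDensity) := by
  rw [lintegral_withDensity_eq_lintegral_mul _ (measurable_cycleJointDensity c)
      (measurable_setLIntegral_Ioc hf),
    lintegral_withDensity_eq_lintegral_mul _ measurable_rayleighDensity hf]
  have hswap : ∀ p u, cycleJointDensity c p * (Ioc p.1 p.2).indicator f u
      = {p : ℝ × ℝ | u ∈ Ioc p.1 p.2}.indicator (cycleJointDensity c) p * f u := by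
    intro p u
    by_cases h : u ∈ Ioc p.1 p.2 <;>
      simp only [indicator_apply, mem_ofPred_eq, h, if_true, if_false, mul_zero, zero_mul]
  calc ∫⁻ p, cycleJointDensity c p * ∫⁻ u in Ioc p.1 p.2, f u
      = ∫⁻ p, ∫⁻ u, cycleJointDensity c p * (Ioc p.1 p.2).indicator f u := by
        refine lintegral_congr fun p => ?_
        rw [lintegral_const_mul _ (hf.indicator measurableSet_Ioc),
          lintegral_indicator measurableSet_Ioc]
    _ = ∫⁻ u, ∫⁻ p, {p : ℝ × ℝ | u ∈ Ioc p.1 p.2}.indicator (cycleJointDensity c) p * f u := by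
        rw [lintegral_lintegral_swap (((measurable_cycleJointDensity c).comp measurable_fst).mul
          (measurable_indicator_Ioc_prod hf)).aemeasurable]
        simp_rw [hswap]
    _ = ∫⁻ u, ENNReal.ofReal c * (rayleighDensity u * f u) := by
        refine lintegral_congr fun u => ?_
        rw [lintegral_mul_const _ ((measurable_cycleJointDensity c).indicator
          (measurableSet_mem_Ioc u)), lintegral_indicator (measurableSet_mem_Ioc u),
          setLIntegral_mem_Ioc_cycleJointDensity hc, mul_assoc]
    _ = ENNReal.ofReal c * ∫⁻ u, rayleighDensity u * f u :=
        lintegral_const_mul _ (measurable_rayleighDensity.mul hf)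

lemma setLIntegral_Ioc_indicator_Ici_one (a b x : ℝ) :
    ∫⁻ u in Ioc a b, (Ici x).indicator 1 u = ENNReal.ofReal (b - max x a) := by
  rw [lintegral_indicator_one measurableSet_Ici, Measure.restrict_apply measurableSet_Ici,
    inter_comm, measure_congr ((ae_eq_refl (Ioc a b)).inter Ioi_ae_eq_Ici.symm), Ioc_inter_Ioi,
    Real.volume_Ioc, max_comm]

/-- With `ζ` Rayleigh and `(ξ, η)` having joint density
`√(2/π) y e^{-y²/2}` on `{0 < x < y}` (i.e. `η` has density `√(2/π) y² e^{-y²/2}`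
and `ξ` is uniform on `(0, η)` given `η`), one has, for every measurable
nonnegative `f`, `𝔼[f(ζ)] = 𝔼[∫_ξ^η f(u) du] / 𝔼[η - ξ]`; in particular, for
`f = 1_{[x,∞)}` with `x > 0`,
`P(ζ ≥ x) = e^{-x²/2} = 𝔼[(η - max(x, ξ))⁺] / 𝔼[η - ξ]`. -/
theorem rayleigh_cycle_formula
    {Ω : Type*} [MeasureSpace Ω] [IsProbabilityMeasure (ℙ : Measure Ω)]
    (ζ ξ η : Ω → ℝ)
    (hζmeas : Measurable ζ) (hξmeas : Measurable ξ) (hηmeas : Measurable η)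
    (hζnonneg : ∀ ω, 0 ≤ ζ ω)
    (hζtail : ∀ x : ℝ, 0 < x →
      ℙ {ω | x ≤ ζ ω} = ENNReal.ofReal (Real.exp (-x ^ 2 / 2)))
    (hjoint : Measure.map (fun ω => (ξ ω, η ω)) ℙ
      = (volume : Measure (ℝ × ℝ)).withDensity (fun p =>
          ENNReal.ofReal
            (if 0 < p.1 ∧ p.1 < p.2 then
              Real.sqrt (2 / Real.pi) * p.2 * Real.exp (-p.2 ^ 2 / 2)
            else 0))) :
    (∀ f : ℝ → ℝ≥0∞, Measurable f →
        ∫⁻ ω, f (ζ ω) ∂ℙ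
          = (∫⁻ ω, ∫⁻ u in Set.Ioc (ξ ω) (η ω), f u ∂volume ∂ℙ)
              / ∫⁻ ω, ENNReal.ofReal (η ω - ξ ω) ∂ℙ)
      ∧ ∀ x : ℝ, 0 < x →
          ℙ {ω | x ≤ ζ ω} = ENNReal.ofReal (Real.exp (-x ^ 2 / 2))
            ∧ ENNReal.ofReal (Real.exp (-x ^ 2 / 2))
                = (∫⁻ ω, ENNReal.ofReal (η ω - max x (ξ ω)) ∂ℙ)
                    / ∫⁻ ω, ENNReal.ofReal (η ω - ξ ω) ∂ℙ := by
  set c := Real.sqrt (2 / Real.pi)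
  have hc : ENNReal.ofReal c ≠ 0 :=
    ENNReal.ofReal_pos.2 (Real.sqrt_pos.2 (div_pos two_pos Real.pi_pos)) |>.ne'
  have hlaw := map_eq_withDensity_rayleighDensity ℙ hζmeas hζnonneg hζtail
  have hcycle : ∀ f : ℝ → ℝ≥0∞, Measurable f →
      ∫⁻ ω, ∫⁻ u in Ioc (ξ ω) (η ω), f u ∂ℙ = ENNReal.ofReal c * ∫⁻ ω, f (ζ ω) ∂ℙ := by
    intro f hf
    rw [← lintegral_map (measurable_setLIntegral_Ioc hf) (hξmeas.prodMk hηmeas), hjoint,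
      ← lintegral_map hf hζmeas, hlaw]
    exact lintegral_setLIntegral_Ioc_withDensity_cycleJointDensity (Real.sqrt_nonneg _) hf
  have hmean : ∫⁻ ω, ENNReal.ofReal (η ω - ξ ω) ∂ℙ = ENNReal.ofReal c * 1 := by
    simpa using hcycle 1 measurable_one
  have hformula : ∀ f : ℝ → ℝ≥0∞, Measurable f →
      ∫⁻ ω, f (ζ ω) ∂ℙ = (∫⁻ ω, ∫⁻ u in Ioc (ξ ω) (η ω), f u ∂ℙ)
        / ∫⁻ ω, ENNReal.ofReal (η ω - ξ ω) ∂ℙ := fun f hf => by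
    rw [hcycle f hf, hmean, ENNReal.mul_div_mul_left _ _ hc ofReal_ne_top, div_one]
  refine ⟨hformula, fun x hx => ⟨hζtail x hx, ?_⟩⟩
  have hf : Measurable ((Ici x).indicator (1 : ℝ → ℝ≥0∞)) :=
    measurable_one.indicator measurableSet_Ici
  have hprob : ℙ {ω | x ≤ ζ ω} = ∫⁻ ω, (Ici x).indicator 1 (ζ ω) ∂ℙ := by
    rw [← lintegral_map hf hζmeas, lintegral_indicator_one measurableSet_Ici,
      Measure.map_apply hζmeas measurableSet_Ici]
    rfl
  rw [← hζtail x hx, hprob, hformula _ hf]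
  simp_rw [setLIntegral_Ioc_indicator_Ici_one]
end
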